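/- arXiv:1707.00520 — 4 statements merged into one kernel-verified Lean document; each statement's English description precedes it below -/
import Mathlib

section
/- Differential inequality for one-arm probabilities (mean-field lemma). Fix d ≥ 1 and n ≥ 1, and let θ_n(p) = ℙ_p[0 ↔ ∂Λ_n] (a polynomial function of p since this event depends only on edges in E_n). Then for every p ∈ (0,1), θ_n'(p) ≥ (1/(p(1−p))) · ( inf_{S : 0 ∈ S ⊆ Λ_n} φ_p(S) ) · (1 − θ_n(p)). -/
/-!
Write `θ_n(p) = ℙ_p[A]` for the increasing event `A = {0 ↔ ∂Λ_n}` of the finitely many edges of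
`Λ_n`. Russo's formula gives `θ_n'(p) = (1 - p)⁻¹ 𝔼_p[N]`, where `N` counts the edges whose opening
makes `A` occur. On `¬A`, let `𝒮 ∋ 0` be the set of vertices of `Λ_n` not joined to `∂Λ_n`: every
edge of `Δ𝒮` whose inner end is joined to `0` inside `𝒮` is such an edge. The event `{𝒮 = S}`
depends only on the edges not inside `S`, so the configuration inside `S` is still Bernoulli given
it, and the conditional expectation of the number of these edges is `φ_p(S) / p`. Summing over
`S` gives `θ_n'(p) ≥ (p (1 - p))⁻¹ · inf φ_p · ℙ_p[¬A]`.
-/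

open scoped BigOperators Classical

namespace Stmt14

/-- The `i`-th unit vector of `ℤ^d`. -/
def unit (d : ℕ) (i : Fin d) : Fin d → ℤ := fun j => if j = i then 1 else 0

/-- The box `Λ_n = [-n,n]^d ∩ ℤ^d`. -/
noncomputable def box (d n : ℕ) : Finset (Fin d → ℤ) :=
  Fintype.piFinset fun _ : Fin d => Finset.Icc (-(n : ℤ)) (n : ℤ)

/-- The edge set `E_n` of the box: an edge is encoded by a pair `(x, i)`, joining
`x` and `x + unit i`; both endpoints must lie in the box. -/
noncomputable def boxEdges (d n : ℕ) : Finset ((Fin d → ℤ) × Fin d) :=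
  ((box d n) ×ˢ (Finset.univ : Finset (Fin d))).filter fun e => e.1 + unit d e.2 ∈ box d n

/-- Extend a configuration on the box edges by closed edges. -/
noncomputable def ext (d n : ℕ) (σ : {e // e ∈ boxEdges d n} → Bool) :
    ((Fin d → ℤ) × Fin d) → Bool :=
  fun e => if h : e ∈ boxEdges d n then σ ⟨e, h⟩ else false

/-- Adjacency by an open edge. -/
def adj (d : ℕ) (ω : ((Fin d → ℤ) × Fin d) → Bool) (x y : Fin d → ℤ) : Prop :=
  ∃ i : Fin d, (ω (x, i) = true ∧ y = x + unit d i) ∨ (ω (y, i) = true ∧ x = y + unit d i)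

/-- Connectivity by open paths. -/
def conn (d : ℕ) (ω : ((Fin d → ℤ) × Fin d) → Bool) : (Fin d → ℤ) → (Fin d → ℤ) → Prop :=
  Relation.ReflTransGen (adj d ω)

/-- The inner vertex boundary `∂Λ_n`. -/
noncomputable def bdryBox (d n : ℕ) : Finset (Fin d → ℤ) :=
  (box d n).filter fun x => ∃ i : Fin d, x + unit d i ∉ box d n ∨ x - unit d i ∉ box d n

/-- Bernoulli weight `p^{o(σ)} (1-p)^{c(σ)}` of a configuration on the box edges. -/
noncomputable def bw (d n : ℕ) (p : ℝ) (σ : {e // e ∈ boxEdges d n} → Bool) : ℝ :=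
  p ^ (Finset.univ.filter fun e : {e // e ∈ boxEdges d n} => σ e = true).card *
    (1 - p) ^ (Finset.univ.filter fun e : {e // e ∈ boxEdges d n} => σ e = false).card

/-- `θ_n(p) = ℙ_p[0 ↔ ∂Λ_n]`, as an explicit (polynomial) function of `p`. -/
noncomputable def theta (d n : ℕ) (p : ℝ) : ℝ :=
  ∑ σ : {e // e ∈ boxEdges d n} → Bool,
    if ∃ y ∈ bdryBox d n, conn d (ext d n σ) 0 y then bw d n p σ else 0

/-- The edges with both endpoints in `S`. -/
noncomputable def sEdges (d : ℕ) (S : Finset (Fin d → ℤ)) : Finset ((Fin d → ℤ) × Fin d) :=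
  (S ×ˢ (Finset.univ : Finset (Fin d))).filter fun e => e.1 + unit d e.2 ∈ S

/-- Extend a configuration on the edges inside `S` by closed edges. -/
noncomputable def extS (d : ℕ) (S : Finset (Fin d → ℤ))
    (τ : {e // e ∈ sEdges d S} → Bool) : ((Fin d → ℤ) × Fin d) → Bool :=
  fun e => if h : e ∈ sEdges d S then τ ⟨e, h⟩ else false

/-- Bernoulli weight of a configuration on the edges inside `S`. -/
noncomputable def bwS (d : ℕ) (S : Finset (Fin d → ℤ)) (p : ℝ)
    (τ : {e // e ∈ sEdges d S} → Bool) : ℝ :=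
  p ^ (Finset.univ.filter fun e : {e // e ∈ sEdges d S} => τ e = true).card *
    (1 - p) ^ (Finset.univ.filter fun e : {e // e ∈ sEdges d S} => τ e = false).card

/-- `ℙ_p[0 ↔^S x]`: the probability that `0` is connected to `x` by an open path using
only edges with both endpoints in `S`. -/
noncomputable def thetaS (d : ℕ) (S : Finset (Fin d → ℤ)) (p : ℝ) (x : Fin d → ℤ) : ℝ :=
  ∑ τ : {e // e ∈ sEdges d S} → Bool,
    if conn d (extS d S τ) 0 x then bwS d S p τ else 0

/-- `φ_p(S) = p ∑_{xy ∈ ΔS, x ∈ S} ℙ_p[0 ↔^S x]`. -/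
noncomputable def phiS (d : ℕ) (p : ℝ) (S : Finset (Fin d → ℤ)) : ℝ :=
  p * ∑ x ∈ S, ∑ i : Fin d,
    ((if x + unit d i ∉ S then thetaS d S p x else 0) +
      (if x - unit d i ∉ S then thetaS d S p x else 0))

/-- `inf_{0 ∈ S ⊆ Λ_n} φ_p(S)`. -/
noncomputable def infPhi (d n : ℕ) (p : ℝ) : ℝ :=
  sInf {r : ℝ | ∃ S : Finset (Fin d → ℤ),
    (0 : Fin d → ℤ) ∈ S ∧ S ⊆ box d n ∧ r = phiS d p S}

section Bernoulli

variable {ι κ : Type*} [Fintype ι] [Fintype κ]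

noncomputable def bernoulliWeight (p : ℝ) (ω : ι → Bool) : ℝ :=
  ∏ i, if ω i then p else 1 - p

theorem bernoulliWeight_eq_pow (p : ℝ) (ω : ι → Bool) :
    bernoulliWeight p ω = p ^ (Finset.univ.filter fun i => ω i = true).card *
      (1 - p) ^ (Finset.univ.filter fun i => ω i = false).card := by
  rw [bernoulliWeight, Finset.prod_ite, Finset.prod_const, Finset.prod_const]
  simp only [Bool.not_eq_true]

theorem bernoulliWeight_nonneg {p : ℝ} (hp : p ∈ Set.Icc (0 : ℝ) 1) (ω : ι → Bool) :
    0 ≤ bernoulliWeight p ω :=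
  Finset.prod_nonneg fun i _ => by split <;> linarith [hp.1, hp.2]

theorem bernoulliWeight_comp_equiv (p : ℝ) (e : κ ≃ ι) (ω : ι → Bool) :
    bernoulliWeight p (ω ∘ e) = bernoulliWeight p ω :=
  e.prod_comp fun i => if ω i then p else 1 - p

theorem bernoulliWeight_piEquivPiSubtypeProd_symm (p : ℝ) (J : ι → Prop) [DecidablePred J]
    (a : {i // J i} → Bool) (b : {i // ¬ J i} → Bool) :
    bernoulliWeight p ((Equiv.piEquivPiSubtypeProd J fun _ => Bool).symm (a, b)) =
      bernoulliWeight p a * bernoulliWeight p b := by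
  rw [bernoulliWeight, ← Fintype.prod_subtype_mul_prod_subtype J]
  congr 1 <;> refine Finset.prod_congr rfl fun i _ => ?_ <;>
    simp [Equiv.piEquivPiSubtypeProd_symm_apply, i.2]

variable [DecidableEq ι]

noncomputable def bernoulliProb (p : ℝ) (A : (ι → Bool) → Prop) [DecidablePred A] : ℝ :=
  ∑ ω, if A ω then bernoulliWeight p ω else 0

theorem sum_bernoulliWeight (p : ℝ) : ∑ ω : ι → Bool, bernoulliWeight p ω = 1 := by
  simp only [bernoulliWeight]
  rw [← Fintype.prod_sum fun (_ : ι) (b : Bool) => if b = true then p else 1 - p]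
  simp

theorem bernoulliProb_nonneg {p : ℝ} (hp : p ∈ Set.Icc (0 : ℝ) 1) (A : (ι → Bool) → Prop)
    [DecidablePred A] : 0 ≤ bernoulliProb p A :=
  Finset.sum_nonneg fun ω _ => by split <;> simp [bernoulliWeight_nonneg hp]

theorem bernoulliProb_not (p : ℝ) (A : (ι → Bool) → Prop) [DecidablePred A] :
    bernoulliProb p (fun ω => ¬ A ω) = 1 - bernoulliProb p A := by
  rw [← sum_bernoulliWeight (ι := ι) p, bernoulliProb, bernoulliProb, ← Finset.sum_sub_distrib]
  exact Finset.sum_congr rfl fun ω _ => by split_ifs <;> simp_all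

/-- `B` only depends on the coordinates outside the range of `f`, hence is independent of any
function of `ω ∘ f`. -/
theorem sum_ite_mul_bernoulliWeight_comp [DecidableEq κ] {f : κ → ι} (hf : Function.Injective f)
    {B : (ι → Bool) → Prop} [DecidablePred B]
    (hB : ∀ ω ω', (∀ i, i ∉ Set.range f → ω i = ω' i) → B ω → B ω') (p : ℝ)
    (h : (κ → Bool) → ℝ) :
    ∑ ω, (if B ω then h (ω ∘ f) * bernoulliWeight p ω else 0) =
      bernoulliProb p B * ∑ τ, h τ * bernoulliWeight p τ := by
  let e := Equiv.piEquivPiSubtypeProd (fun i => ∃ k, f k = i) fun _ => Bool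
  let g : κ ≃ {i // ∃ k, f k = i} := Equiv.ofInjective f hf
  let B₀ : ({i // ¬ ∃ k, f k = i} → Bool) → Prop := fun b => B (e.symm (fun _ => false, b))
  have hB₀ : ∀ a b, B (e.symm (a, b)) ↔ B₀ b := fun a b => by
    constructor <;> refine hB _ _ fun i hi => ?_ <;>
      simp [e, Equiv.piEquivPiSubtypeProd_symm_apply, Set.mem_range.not.mp hi]
  have hcomp : ∀ a b, e.symm (a, b) ∘ f = a ∘ g := fun a b =>
    funext fun k => dif_pos ⟨k, rfl⟩
  have hfactor : ∀ h : (κ → Bool) → ℝ,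
      ∑ ω, (if B ω then h (ω ∘ f) * bernoulliWeight p ω else 0) =
        (∑ b, if B₀ b then bernoulliWeight p b else 0) * ∑ τ, h τ * bernoulliWeight p τ := by
    intro h
    rw [← e.symm.sum_comp, Fintype.sum_prod_type, Finset.sum_comm, Finset.sum_mul_sum]
    refine Fintype.sum_equiv (M := ℝ) (Equiv.refl _) _ _ fun b => ?_
    refine Fintype.sum_equiv (M := ℝ) (g.symm.arrowCongr (Equiv.refl Bool)) _ _ fun a => ?_
    have harrow : g.symm.arrowCongr (Equiv.refl Bool) a = a ∘ g := rfl
    rw [hcomp, bernoulliWeight_piEquivPiSubtypeProd_symm, harrow, bernoulliWeight_comp_equiv,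
      Equiv.refl_apply]
    simp only [hB₀]
    split_ifs <;> ring
  have hprob : bernoulliProb p B = ∑ b, if B₀ b then bernoulliWeight p b else 0 := by
    simpa [bernoulliProb, sum_bernoulliWeight] using hfactor fun _ => 1
  rw [hfactor, hprob]

noncomputable def bernoulliWeightOff (p : ℝ) (ω : ι → Bool) (i : ι) : ℝ :=
  ∏ j ∈ Finset.univ.erase i, if ω j then p else 1 - p

theorem bernoulliWeight_eq_mul_off (p : ℝ) (ω : ι → Bool) (i : ι) :
    bernoulliWeight p ω = (if ω i then p else 1 - p) * bernoulliWeightOff p ω i :=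
  (Finset.mul_prod_erase _ _ (Finset.mem_univ i)).symm

theorem bernoulliWeightOff_update (p : ℝ) (ω : ι → Bool) (i : ι) (b : Bool) :
    bernoulliWeightOff p (Function.update ω i b) i = bernoulliWeightOff p ω i :=
  Finset.prod_congr rfl fun j hj => by rw [Function.update_of_ne (Finset.ne_of_mem_erase hj)]

theorem hasDerivAt_bernoulliWeight (p : ℝ) (ω : ι → Bool) :
    HasDerivAt (fun q => bernoulliWeight q ω)
      (∑ i, bernoulliWeightOff p ω i * if ω i then 1 else -1) p := by
  refine HasDerivAt.fun_finsetProd fun i _ => ?_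
  cases ω i
  · simpa using (hasDerivAt_id p).const_sub 1
  · simpa using hasDerivAt_id' p

/-- Flipping coordinate `i` changes the sign of the summand. -/
theorem sum_comp_update_mul_off_mul_sign (p : ℝ) (i : ι) (F : (ι → Bool) → ℝ) :
    ∑ ω, F (Function.update ω i true) * bernoulliWeightOff p ω i * (if ω i then 1 else -1)
      = 0 := by
  set g : (ι → Bool) → ℝ := fun ω =>
    F (Function.update ω i true) * bernoulliWeightOff p ω i * if ω i then 1 else -1
  let flip : (ι → Bool) → ι → Bool := fun ω => Function.update ω i (!ω i)
  have hflip : Function.Involutive flip := fun ω => by simp [flip]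
  have hg : ∀ ω, g (flip ω) = -g ω := fun ω => by
    cases h : ω i <;> simp [g, flip, h, bernoulliWeightOff_update]
  have := Equiv.sum_comp hflip.toPerm g
  simp only [Function.Involutive.coe_toPerm, hg, Finset.sum_neg_distrib] at this
  linarith

noncomputable def pivotals (A : (ι → Bool) → Prop) (ω : ι → Bool) : Finset ι :=
  Finset.univ.filter fun i => ¬ A ω ∧ A (Function.update ω i true)

variable {A : (ι → Bool) → Prop}

theorem mem_pivotals_iff {ω : ι → Bool} {i : ι} :
    i ∈ pivotals A ω ↔ ¬ A ω ∧ A (Function.update ω i true) := by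
  simp [pivotals]

theorem eq_false_of_mem_pivotals {ω : ι → Bool} {i : ι} (h : i ∈ pivotals A ω) :
    ω i = false := by
  rw [mem_pivotals_iff] at h
  by_contra hi
  rw [Bool.not_eq_false] at hi
  exact h.1 (by simpa [← hi] using h.2)

theorem ite_mul_sign_eq_of_monotone [DecidablePred A] (hA : Monotone A) (ω : ι → Bool) (i : ι) :
    (if A ω then (1 : ℝ) else 0) * (if ω i then 1 else -1) =
      (if i ∈ pivotals A ω then 1 else 0) +
        (if A (Function.update ω i true) then 1 else 0) * (if ω i then 1 else -1) := by
  have hmono : A ω → A (Function.update ω i true) :=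
    hA (le_update_self_iff.mpr (Bool.le_true _))
  simp only [mem_pivotals_iff]
  cases hi : ω i
  · by_cases h : A ω <;> by_cases h' : A (Function.update ω i true) <;> simp_all
  · have hupd : Function.update ω i true = ω := by rw [← hi, Function.update_eq_self]
    simp [hupd]

theorem sum_ite_mul_off_mul_sign_of_monotone [DecidablePred A] (hA : Monotone A) (p : ℝ)
    (i : ι) :
    ∑ ω, (if A ω then (1 : ℝ) else 0) * bernoulliWeightOff p ω i * (if ω i then 1 else -1) =
      ∑ ω, if i ∈ pivotals A ω then bernoulliWeightOff p ω i else 0 := by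
  have hflip := sum_comp_update_mul_off_mul_sign p i fun ω => if A ω then (1 : ℝ) else 0
  calc _ = ∑ ω, ((if i ∈ pivotals A ω then bernoulliWeightOff p ω i else 0) +
        (if A (Function.update ω i true) then (1 : ℝ) else 0) * bernoulliWeightOff p ω i *
          (if ω i then 1 else -1)) :=
        Finset.sum_congr rfl fun ω _ => by
          rw [mul_right_comm, ite_mul_sign_eq_of_monotone hA]
          split_ifs <;> ring
    _ = _ := by rw [Finset.sum_add_distrib, hflip, add_zero]

/-- Russo's formula. -/
theorem hasDerivAt_bernoulliProb [DecidablePred A] (hA : Monotone A) {p : ℝ} (hp : p ≠ 1) :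
    HasDerivAt (fun q => bernoulliProb q A)
      ((1 - p)⁻¹ * ∑ ω, ((pivotals A ω).card : ℝ) * bernoulliWeight p ω) p := by
  have hderiv : HasDerivAt (fun q => bernoulliProb q A)
      (∑ ω, if A ω then ∑ i, bernoulliWeightOff p ω i * (if ω i then 1 else -1) else 0) p := by
    refine HasDerivAt.fun_sum fun ω _ => ?_
    split_ifs
    · exact hasDerivAt_bernoulliWeight p ω
    · exact hasDerivAt_const p 0
  convert hderiv using 1
  have hoff : ∀ ω i, i ∈ pivotals A ω →
      bernoulliWeightOff p ω i = (1 - p)⁻¹ * bernoulliWeight p ω := fun ω i hi => by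
    rw [bernoulliWeight_eq_mul_off p ω i, eq_false_of_mem_pivotals hi]
    field_simp [sub_ne_zero.mpr hp.symm]
    simp
  calc (1 - p)⁻¹ * ∑ ω, ((pivotals A ω).card : ℝ) * bernoulliWeight p ω
      = ∑ ω, ∑ i, if i ∈ pivotals A ω then bernoulliWeightOff p ω i else 0 := by
        rw [Finset.mul_sum]
        refine Finset.sum_congr rfl fun ω _ => ?_
        rw [Finset.sum_ite_mem, Finset.univ_inter, Finset.sum_congr rfl (hoff ω),
          Finset.sum_const, nsmul_eq_mul]
        ring
    _ = ∑ i, ∑ ω, (if A ω then (1 : ℝ) else 0) * bernoulliWeightOff p ω i *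
          (if ω i then 1 else -1) := by
        rw [Finset.sum_comm]
        exact Finset.sum_congr rfl fun i _ => (sum_ite_mul_off_mul_sign_of_monotone hA p i).symm
    _ = _ := by
        rw [Finset.sum_comm]
        refine Finset.sum_congr rfl fun ω _ => ?_
        split_ifs <;> simp

end Bernoulli

theorem _root_.Relation.ReflTransGen.mem_and_of_forall_mem {α : Type*} {r r' : α → α → Prop}
    {s : Set α} (h : ∀ x y, x ∈ s → r x y → y ∈ s ∧ r' x y) {x y : α}
    (hxy : Relation.ReflTransGen r x y) (hx : x ∈ s) :
    y ∈ s ∧ Relation.ReflTransGen r' x y := by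
  induction hxy with
  | refl => exact ⟨hx, .refl⟩
  | tail _ hbc ih =>
    obtain ⟨hc, hbc'⟩ := h _ _ ih.1 hbc
    exact ⟨hc, ih.2.tail hbc'⟩

section Connectivity

variable {d : ℕ}

theorem conn_mono {ω ω' : (Fin d → ℤ) × Fin d → Bool} (h : ω ≤ ω') {x y : Fin d → ℤ}
    (hxy : conn d ω x y) : conn d ω' x y := by
  refine Relation.ReflTransGen.mono (r := adj d ω) (fun a b ⟨i, hi⟩ => ⟨i, ?_⟩) _ _ hxy
  exact hi.imp (And.imp_left (Bool.le_iff_imp.mp (h _))) (And.imp_left (Bool.le_iff_imp.mp (h _)))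

theorem adj_symm {ω : (Fin d → ℤ) × Fin d → Bool} {x y : Fin d → ℤ} (hxy : adj d ω x y) :
    adj d ω y x :=
  let ⟨i, hi⟩ := hxy; ⟨i, hi.symm⟩

theorem conn_symm {ω : (Fin d → ℤ) × Fin d → Bool} {x y : Fin d → ℤ} (hxy : conn d ω x y) :
    conn d ω y x :=
  haveI : Std.Symm (adj d ω) := ⟨fun _ _ => adj_symm⟩
  Std.Symm.symm (r := Relation.ReflTransGen (adj d ω)) _ _ hxy

theorem mem_and_conn_of_conn {ω ω' : (Fin d → ℤ) × Fin d → Bool} {s : Set (Fin d → ℤ)}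
    (h : ∀ a i, ω (a, i) = true → a ∈ s ∨ a + unit d i ∈ s →
      a ∈ s ∧ a + unit d i ∈ s ∧ ω' (a, i) = true)
    {x y : Fin d → ℤ} (hx : x ∈ s) (hxy : conn d ω x y) : y ∈ s ∧ conn d ω' x y := by
  refine Relation.ReflTransGen.mem_and_of_forall_mem (fun a b ha ⟨i, hi⟩ => ?_) hxy hx
  rcases hi with ⟨hω, rfl⟩ | ⟨hω, rfl⟩
  · obtain ⟨-, hb, hω'⟩ := h a i hω (.inl ha)
    exact ⟨hb, i, .inl ⟨hω', rfl⟩⟩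
  · obtain ⟨hb, -, hω'⟩ := h b i hω (.inr ha)
    exact ⟨hb, i, .inr ⟨hω', rfl⟩⟩

end Connectivity

section DisconnectedSet

variable {d n : ℕ}

def oneArm (d n : ℕ) (σ : {e // e ∈ boxEdges d n} → Bool) : Prop :=
  ∃ y ∈ bdryBox d n, conn d (ext d n σ) 0 y

noncomputable def disconnectedFromBdry (d n : ℕ) (σ : {e // e ∈ boxEdges d n} → Bool) :
    Finset (Fin d → ℤ) :=
  (box d n).filter fun x => ¬ ∃ y ∈ bdryBox d n, conn d (ext d n σ) x y

theorem mem_boxEdges {e : (Fin d → ℤ) × Fin d} :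
    e ∈ boxEdges d n ↔ e.1 ∈ box d n ∧ e.1 + unit d e.2 ∈ box d n := by
  simp [boxEdges]

theorem mem_sEdges {S : Finset (Fin d → ℤ)} {e : (Fin d → ℤ) × Fin d} :
    e ∈ sEdges d S ↔ e.1 ∈ S ∧ e.1 + unit d e.2 ∈ S := by
  simp [sEdges]

theorem sEdges_subset_boxEdges {S : Finset (Fin d → ℤ)} (hS : S ⊆ box d n) :
    sEdges d S ⊆ boxEdges d n := fun e he => by
  rw [mem_sEdges] at he
  exact mem_boxEdges.mpr ⟨hS he.1, hS he.2⟩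

theorem zero_mem_box : (0 : Fin d → ℤ) ∈ box d n := by
  simp [box]

theorem ext_mono {σ σ' : {e // e ∈ boxEdges d n} → Bool} (h : σ ≤ σ') :
    ext d n σ ≤ ext d n σ' := fun e => by
  unfold ext
  split_ifs
  exacts [h _, le_rfl]

theorem oneArm_monotone : Monotone (oneArm d n) :=
  fun _ _ h ⟨y, hy, hconn⟩ => ⟨y, hy, conn_mono (ext_mono h) hconn⟩

theorem mem_disconnectedFromBdry {σ : {e // e ∈ boxEdges d n} → Bool} {x : Fin d → ℤ} :
    x ∈ disconnectedFromBdry d n σ ↔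
      x ∈ box d n ∧ ¬ ∃ y ∈ bdryBox d n, conn d (ext d n σ) x y :=
  Finset.mem_filter

theorem disconnectedFromBdry_subset_box (σ : {e // e ∈ boxEdges d n} → Bool) :
    disconnectedFromBdry d n σ ⊆ box d n :=
  Finset.filter_subset _ _

theorem zero_mem_disconnectedFromBdry_iff (σ : {e // e ∈ boxEdges d n} → Bool) :
    0 ∈ disconnectedFromBdry d n σ ↔ ¬ oneArm d n σ := by
  simp [mem_disconnectedFromBdry, oneArm, zero_mem_box]

theorem notMem_disconnectedFromBdry_of_mem_bdryBox (σ : {e // e ∈ boxEdges d n} → Bool)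
    {y : Fin d → ℤ} (hy : y ∈ bdryBox d n) : y ∉ disconnectedFromBdry d n σ :=
  fun h => (mem_disconnectedFromBdry.mp h).2 ⟨y, hy, .refl⟩

theorem exists_conn_bdryBox {σ : {e // e ∈ boxEdges d n} → Bool} {y : Fin d → ℤ}
    (hy : y ∈ box d n) (hyS : y ∉ disconnectedFromBdry d n σ) :
    ∃ z ∈ bdryBox d n, conn d (ext d n σ) y z := by
  by_contra h
  exact hyS (mem_disconnectedFromBdry.mpr ⟨hy, h⟩)

theorem mem_disconnectedFromBdry_iff_of_ext {σ : {e // e ∈ boxEdges d n} → Bool}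
    {a : Fin d → ℤ} {i : Fin d} (hopen : ext d n σ (a, i) = true) :
    a ∈ disconnectedFromBdry d n σ ↔ a + unit d i ∈ disconnectedFromBdry d n σ := by
  have hbox : (a, i) ∈ boxEdges d n := by
    by_contra h
    simp [ext, h] at hopen
  have hadj : adj d (ext d n σ) a (a + unit d i) := ⟨i, .inl ⟨hopen, rfl⟩⟩
  obtain ⟨ha, hb⟩ := mem_boxEdges.mp hbox
  simp only [mem_disconnectedFromBdry, ha, hb, true_and, not_iff_not]
  exact ⟨fun ⟨y, hy, hc⟩ => ⟨y, hy, .head (adj_symm hadj) hc⟩,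
    fun ⟨y, hy, hc⟩ => ⟨y, hy, .head hadj hc⟩⟩

theorem mem_compl_disconnectedFromBdry_of_ext {σ : {e // e ∈ boxEdges d n} → Bool}
    {ω ω' : (Fin d → ℤ) × Fin d → Bool}
    (hω : ∀ e ∉ sEdges d (disconnectedFromBdry d n σ), ω e = ext d n σ e)
    (hω' : ∀ e ∉ sEdges d (disconnectedFromBdry d n σ), ω' e = ext d n σ e)
    (a : Fin d → ℤ) (i : Fin d) (hopen : ω (a, i) = true)
    (hout : a ∈ (↑(disconnectedFromBdry d n σ) : Set _)ᶜ ∨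
      a + unit d i ∈ (↑(disconnectedFromBdry d n σ) : Set _)ᶜ) :
    a ∈ (↑(disconnectedFromBdry d n σ) : Set _)ᶜ ∧
      a + unit d i ∈ (↑(disconnectedFromBdry d n σ) : Set _)ᶜ ∧ ω' (a, i) = true := by
  have hnot : (a, i) ∉ sEdges d (disconnectedFromBdry d n σ) := fun h => by
    rw [mem_sEdges] at h
    simp_all
  rw [hω _ hnot] at hopen
  have hcross := mem_disconnectedFromBdry_iff_of_ext hopen
  simp only [Set.mem_compl_iff, Finset.mem_coe] at hout ⊢
  exact ⟨by tauto, by tauto, (hω' _ hnot).trans hopen⟩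

/-- No open edge leaves `disconnectedFromBdry σ`, so open paths starting outside it never use the
edges inside it. -/
theorem disconnectedFromBdry_eq_of_forall_notMem_sEdges {σ σ' : {e // e ∈ boxEdges d n} → Bool}
    (hag : ∀ e : {e // e ∈ boxEdges d n}, e.1 ∉ sEdges d (disconnectedFromBdry d n σ) →
      σ e = σ' e) :
    disconnectedFromBdry d n σ' = disconnectedFromBdry d n σ := by
  have hext : ∀ e ∉ sEdges d (disconnectedFromBdry d n σ), ext d n σ' e = ext d n σ e :=
    fun e he => by
      unfold ext
      split_ifs with h
      exacts [(hag ⟨e, h⟩ he).symm, rfl]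
  have hstay := mem_compl_disconnectedFromBdry_of_ext (fun _ _ => rfl) hext
  have hstay' := mem_compl_disconnectedFromBdry_of_ext hext fun _ _ => rfl
  ext x
  by_cases hx : x ∈ box d n
  · simp only [mem_disconnectedFromBdry (σ := σ'), hx, true_and]
    constructor
    · intro h
      by_contra hxS
      obtain ⟨y, hy, hc⟩ := exists_conn_bdryBox hx hxS
      exact h ⟨y, hy, (mem_and_conn_of_conn hstay hxS hc).2⟩
    · rintro hxS ⟨y, hy, hc⟩
      have hyS := notMem_disconnectedFromBdry_of_mem_bdryBox σ hy
      exact (mem_and_conn_of_conn hstay' hyS (conn_symm hc)).1 hxS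
  · exact iff_of_false (fun h => hx (disconnectedFromBdry_subset_box σ' h))
      (fun h => hx (disconnectedFromBdry_subset_box σ h))

end DisconnectedSet

section HalfEdges

variable {d : ℕ}

/-- `(x, i, b)` is the half-edge from `x` to `x + eᵢ` (`b = true`) or to `x - eᵢ` (`b = false`);
`halfEdgeEdge` is its edge in the encoding `(a, i) = {a, a + eᵢ}` of `boxEdges`. -/
def halfEdgeTarget (z : (Fin d → ℤ) × Fin d × Bool) : Fin d → ℤ :=
  if z.2.2 then z.1 + unit d z.2.1 else z.1 - unit d z.2.1

def halfEdgeEdge (z : (Fin d → ℤ) × Fin d × Bool) : (Fin d → ℤ) × Fin d :=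
  if z.2.2 then (z.1, z.2.1) else (z.1 - unit d z.2.1, z.2.1)

noncomputable def boundaryHalfEdges (S : Finset (Fin d → ℤ)) :
    Finset ((Fin d → ℤ) × Fin d × Bool) :=
  (S ×ˢ Finset.univ).filter fun z => halfEdgeTarget z ∉ S

theorem mem_boundaryHalfEdges {S : Finset (Fin d → ℤ)} {z : (Fin d → ℤ) × Fin d × Bool} :
    z ∈ boundaryHalfEdges S ↔ z.1 ∈ S ∧ halfEdgeTarget z ∉ S := by
  simp [boundaryHalfEdges]

theorem halfEdgeEdge_endpoints (z : (Fin d → ℤ) × Fin d × Bool) :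
    ((halfEdgeEdge z).1 = z.1 ∧ (halfEdgeEdge z).1 + unit d (halfEdgeEdge z).2 = halfEdgeTarget z) ∨
      ((halfEdgeEdge z).1 = halfEdgeTarget z ∧
        (halfEdgeEdge z).1 + unit d (halfEdgeEdge z).2 = z.1) := by
  obtain ⟨x, i, b⟩ := z
  cases b <;> simp [halfEdgeEdge, halfEdgeTarget]

theorem adj_of_halfEdgeEdge {ω : (Fin d → ℤ) × Fin d → Bool} {z : (Fin d → ℤ) × Fin d × Bool}
    (h : ω (halfEdgeEdge z) = true) : adj d ω z.1 (halfEdgeTarget z) := by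
  obtain ⟨x, i, b⟩ := z
  cases b
  · exact ⟨i, .inr ⟨h, by simp [halfEdgeTarget]⟩⟩
  · exact ⟨i, .inl ⟨h, rfl⟩⟩

/-- A boundary half-edge is recovered from its edge: it is based at the endpoint lying in `S`. -/
theorem injOn_halfEdgeEdge (S : Finset (Fin d → ℤ)) :
    Set.InjOn halfEdgeEdge (boundaryHalfEdges S : Set ((Fin d → ℤ) × Fin d × Bool)) := by
  refine Set.LeftInvOn.injOn (f₁' := fun e =>
    if e.1 ∈ S then (e.1, e.2, true) else (e.1 + unit d e.2, e.2, false)) ?_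
  rintro ⟨x, i, b⟩ hz
  rw [Finset.mem_coe, mem_boundaryHalfEdges] at hz
  cases b <;> simp_all [halfEdgeEdge, halfEdgeTarget]

theorem sum_boundaryHalfEdges (S : Finset (Fin d → ℤ)) (t : (Fin d → ℤ) → ℝ) :
    ∑ z ∈ boundaryHalfEdges S, t z.1 =
      ∑ x ∈ S, ∑ i : Fin d,
        ((if x + unit d i ∉ S then t x else 0) + (if x - unit d i ∉ S then t x else 0)) := by
  rw [boundaryHalfEdges, Finset.sum_filter, Finset.sum_product]
  refine Finset.sum_congr rfl fun x _ => ?_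
  rw [← Finset.univ_product_univ, Finset.sum_product]
  simp [halfEdgeTarget]

end HalfEdges

section MeanField

variable {d n : ℕ}

theorem theta_eq_bernoulliProb (d n : ℕ) : theta d n = fun p => bernoulliProb p (oneArm d n) := by
  funext p
  exact Finset.sum_congr rfl fun σ _ => if_congr Iff.rfl (bernoulliWeight_eq_pow p σ).symm rfl

theorem thetaS_eq_bernoulliProb (S : Finset (Fin d → ℤ)) (p : ℝ) (x : Fin d → ℤ) :
    thetaS d S p x = bernoulliProb p fun τ => conn d (extS d S τ) 0 x := by
  simp only [thetaS, bernoulliProb, bwS, bernoulliWeight_eq_pow]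

theorem phiS_eq_sum_boundaryHalfEdges (p : ℝ) (S : Finset (Fin d → ℤ)) :
    phiS d p S = p * ∑ z ∈ boundaryHalfEdges S, thetaS d S p z.1 := by
  rw [phiS, sum_boundaryHalfEdges]

theorem infPhi_le_phiS {p : ℝ} (hp : p ∈ Set.Icc (0 : ℝ) 1) {S : Finset (Fin d → ℤ)}
    (hS0 : (0 : Fin d → ℤ) ∈ S) (hSb : S ⊆ box d n) : infPhi d n p ≤ phiS d p S := by
  refine csInf_le ⟨0, ?_⟩ ⟨S, hS0, hSb, rfl⟩
  rintro _ ⟨T, -, -, rfl⟩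
  rw [phiS_eq_sum_boundaryHalfEdges]
  exact mul_nonneg hp.1 (Finset.sum_nonneg fun z _ => by
    rw [thetaS_eq_bernoulliProb]
    exact bernoulliProb_nonneg hp _)

noncomputable def connectedBoundaryHalfEdges (S : Finset (Fin d → ℤ))
    (τ : {e // e ∈ sEdges d S} → Bool) : Finset ((Fin d → ℤ) × Fin d × Bool) :=
  (boundaryHalfEdges S).filter fun z => conn d (extS d S τ) 0 z.1

theorem sum_card_connectedBoundaryHalfEdges_mul (S : Finset (Fin d → ℤ)) (p : ℝ) :
    ∑ τ, ((connectedBoundaryHalfEdges S τ).card : ℝ) * bernoulliWeight p τ =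
      ∑ z ∈ boundaryHalfEdges S, thetaS d S p z.1 := by
  simp only [connectedBoundaryHalfEdges, Finset.card_filter, Nat.cast_sum, Nat.cast_ite,
    Nat.cast_one, Nat.cast_zero, Finset.sum_mul, ite_mul, one_mul, zero_mul]
  rw [Finset.sum_comm]
  exact Finset.sum_congr rfl fun z _ => (thetaS_eq_bernoulliProb S p z.1).symm

noncomputable def restrictConf (S : Finset (Fin d → ℤ)) (σ : {e // e ∈ boxEdges d n} → Bool) :
    {e // e ∈ sEdges d S} → Bool :=
  fun e => ext d n σ e.1

theorem extS_restrictConf_le (S : Finset (Fin d → ℤ)) (σ : {e // e ∈ boxEdges d n} → Bool) :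
    extS d S (restrictConf S σ) ≤ ext d n σ := fun e => by
  unfold extS restrictConf
  split_ifs
  exacts [le_rfl, Bool.false_le _]

theorem halfEdgeTarget_mem_box {σ : {e // e ∈ boxEdges d n} → Bool}
    {z : (Fin d → ℤ) × Fin d × Bool} (hz : z.1 ∈ disconnectedFromBdry d n σ) :
    halfEdgeTarget z ∈ box d n := by
  have hbox := disconnectedFromBdry_subset_box σ hz
  have hnot : z.1 ∉ bdryBox d n := fun h => notMem_disconnectedFromBdry_of_mem_bdryBox σ h hz
  simp only [bdryBox, Finset.mem_filter, hbox, true_and, not_exists, not_or, not_not] at hnot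
  unfold halfEdgeTarget
  split_ifs
  exacts [(hnot z.2.1).1, (hnot z.2.1).2]

/-- Opening the edge of a boundary half-edge of `disconnectedFromBdry σ` whose base is joined to
`0` joins `0` to `∂Λ_n`. -/
theorem card_connectedBoundaryHalfEdges_le_card_pivotals {σ : {e // e ∈ boxEdges d n} → Bool}
    (hA : ¬ oneArm d n σ) :
    (connectedBoundaryHalfEdges (disconnectedFromBdry d n σ)
      (restrictConf (disconnectedFromBdry d n σ) σ)).card ≤ (pivotals (oneArm d n) σ).card := by
  set S := disconnectedFromBdry d n σ
  rw [← Finset.card_map (Function.Embedding.subtype _)]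
  refine Finset.card_le_card_of_injOn halfEdgeEdge (fun z hz => ?_)
    ((injOn_halfEdgeEdge S).mono (Finset.filter_subset _ _))
  obtain ⟨hzS, hconn⟩ := Finset.mem_filter.mp hz
  obtain ⟨hx, htgt⟩ := mem_boundaryHalfEdges.mp hzS
  have hxbox := disconnectedFromBdry_subset_box σ hx
  have htgtbox := halfEdgeTarget_mem_box hx
  have hE : halfEdgeEdge z ∈ boxEdges d n := by
    rcases halfEdgeEdge_endpoints z with ⟨h1, h2⟩ | ⟨h1, h2⟩ <;>
      exact mem_boxEdges.mpr (by rw [h2, h1]; exact ⟨‹_›, ‹_›⟩)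
  refine Finset.mem_map.mpr ⟨⟨_, hE⟩, mem_pivotals_iff.mpr ⟨hA, ?_⟩, rfl⟩
  have hle := ext_mono (le_update_self_iff.mpr (Bool.le_true (σ ⟨_, hE⟩)))
  obtain ⟨y, hy, hcy⟩ := exists_conn_bdryBox htgtbox htgt
  have h0x := conn_mono ((extS_restrictConf_le S σ).trans hle) hconn
  have hxt : adj d (ext d n (Function.update σ ⟨_, hE⟩ true)) z.1 (halfEdgeTarget z) :=
    adj_of_halfEdgeEdge (by simp [ext, hE])
  have h0y : conn d _ 0 y := (Relation.ReflTransGen.tail h0x hxt).trans (conn_mono hle hcy)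
  exact ⟨y, hy, h0y⟩

theorem sum_card_connectedBoundaryHalfEdges_le {p : ℝ} (hp : p ∈ Set.Icc (0 : ℝ) 1) :
    ∑ σ, (if ¬ oneArm d n σ then
        ((connectedBoundaryHalfEdges (disconnectedFromBdry d n σ)
          (restrictConf (disconnectedFromBdry d n σ) σ)).card : ℝ) * bernoulliWeight p σ
        else 0) ≤
      ∑ σ, ((pivotals (oneArm d n) σ).card : ℝ) * bernoulliWeight p σ := by
  refine Finset.sum_le_sum fun σ _ => ?_
  by_cases hA : oneArm d n σ
  · rw [if_neg (not_not_intro hA)]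
    exact mul_nonneg (Nat.cast_nonneg _) (bernoulliWeight_nonneg hp σ)
  · rw [if_pos hA]
    exact mul_le_mul_of_nonneg_right
      (by exact_mod_cast card_connectedBoundaryHalfEdges_le_card_pivotals hA)
      (bernoulliWeight_nonneg hp σ)

theorem sum_ite_not_oneArm_eq (F : Finset (Fin d → ℤ) → ({e // e ∈ boxEdges d n} → Bool) → ℝ) :
    ∑ σ, (if ¬ oneArm d n σ then F (disconnectedFromBdry d n σ) σ else 0) =
      ∑ S ∈ (box d n).powerset.filter (0 ∈ ·),
        ∑ σ, if disconnectedFromBdry d n σ = S then F S σ else 0 := by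
  rw [Finset.sum_comm]
  refine Finset.sum_congr rfl fun σ _ => ?_
  rw [Finset.sum_ite_eq]
  simp [zero_mem_disconnectedFromBdry_iff, disconnectedFromBdry_subset_box]

/-- The event `{disconnectedFromBdry σ = S}` only sees the edges not inside `S`. -/
theorem mul_sum_ite_disconnectedFromBdry_eq {S : Finset (Fin d → ℤ)} (hS : S ⊆ box d n) (p : ℝ) :
    p * ∑ σ, (if disconnectedFromBdry d n σ = S then
        ((connectedBoundaryHalfEdges S (restrictConf S σ)).card : ℝ) * bernoulliWeight p σ
        else 0) =
      bernoulliProb p (fun σ => disconnectedFromBdry d n σ = S) * phiS d p S := by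
  let f : {e // e ∈ sEdges d S} → {e // e ∈ boxEdges d n} :=
    fun e => ⟨e.1, sEdges_subset_boxEdges hS e.2⟩
  have hf : Function.Injective f := fun a b h =>
    Subtype.ext (congrArg (fun e : {e // e ∈ boxEdges d n} => e.1) h)
  have hrestrict : ∀ σ, restrictConf S σ = σ ∘ f := fun σ => funext fun e => by
    simp [restrictConf, ext, f, sEdges_subset_boxEdges hS e.2]
  have hB : ∀ σ σ' : {e // e ∈ boxEdges d n} → Bool, (∀ e ∉ Set.range f, σ e = σ' e) →
      disconnectedFromBdry d n σ = S → disconnectedFromBdry d n σ' = S := by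
    rintro σ σ' hag rfl
    refine disconnectedFromBdry_eq_of_forall_notMem_sEdges fun e he => hag e ?_
    rintro ⟨k, rfl⟩
    exact he k.2
  simp only [hrestrict]
  rw [sum_ite_mul_bernoulliWeight_comp hf hB p fun τ => (connectedBoundaryHalfEdges S τ).card,
    sum_card_connectedBoundaryHalfEdges_mul, phiS_eq_sum_boundaryHalfEdges]
  ring

theorem infPhi_mul_one_sub_theta_le {p : ℝ} (hp : p ∈ Set.Icc (0 : ℝ) 1) :
    infPhi d n p * (1 - theta d n p) ≤
      p * ∑ σ, ((pivotals (oneArm d n) σ).card : ℝ) * bernoulliWeight p σ := by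
  have hprob : 1 - theta d n p = ∑ S ∈ (box d n).powerset.filter (0 ∈ ·),
      bernoulliProb p (fun σ => disconnectedFromBdry d n σ = S) := by
    rw [theta_eq_bernoulliProb, ← bernoulliProb_not]
    exact sum_ite_not_oneArm_eq fun _ σ => bernoulliWeight p σ
  refine le_trans ?_ (mul_le_mul_of_nonneg_left (sum_card_connectedBoundaryHalfEdges_le hp) hp.1)
  rw [hprob, sum_ite_not_oneArm_eq fun S σ =>
      ((connectedBoundaryHalfEdges S (restrictConf S σ)).card : ℝ) * bernoulliWeight p σ,
    Finset.mul_sum, Finset.mul_sum]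
  refine Finset.sum_le_sum fun S hS => ?_
  obtain ⟨hSb, hS0⟩ := Finset.mem_filter.mp hS
  rw [mul_sum_ite_disconnectedFromBdry_eq (Finset.mem_powerset.mp hSb), mul_comm]
  exact mul_le_mul_of_nonneg_left (infPhi_le_phiS hp hS0 (Finset.mem_powerset.mp hSb))
    (bernoulliProb_nonneg hp _)

end MeanField

theorem mean_field_differential_inequality_general (d n : ℕ)
    (p : ℝ) (hp : p ∈ Set.Ioo (0 : ℝ) 1) :
    (1 / (p * (1 - p))) * infPhi d n p * (1 - theta d n p) ≤ deriv (theta d n) p := by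
  have hderiv := hasDerivAt_bernoulliProb (oneArm_monotone (d := d) (n := n)) hp.2.ne
  rw [← theta_eq_bernoulliProb] at hderiv
  rw [hderiv.deriv]
  have hpq : 0 < p * (1 - p) := mul_pos hp.1 (sub_pos.mpr hp.2)
  calc (1 / (p * (1 - p))) * infPhi d n p * (1 - theta d n p)
      = infPhi d n p * (1 - theta d n p) / (p * (1 - p)) := by ring
    _ ≤ (p * ∑ σ, ((pivotals (oneArm d n) σ).card : ℝ) * bernoulliWeight p σ) / (p * (1 - p)) :=
        div_le_div_of_nonneg_right (infPhi_mul_one_sub_theta_le (Set.Ioo_subset_Icc_self hp))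
          hpq.le
    _ = _ := by rw [mul_div_mul_left _ _ hp.1.ne', div_eq_inv_mul]

/-- Differential inequality for the one-arm probabilities (mean-field lemma):
`θ_n'(p) ≥ (1/(p(1-p))) ⬝ inf_{0 ∈ S ⊆ Λ_n} φ_p(S) ⬝ (1 - θ_n(p))`. -/
theorem mean_field_differential_inequality (d n : ℕ) (hd : 1 ≤ d) (hn : 1 ≤ n)
    (p : ℝ) (hp : p ∈ Set.Ioo (0 : ℝ) 1) :
    (1 / (p * (1 - p))) * infPhi d n p * (1 - theta d n p) ≤ deriv (theta d n) p :=
  mean_field_differential_inequality_general d n p hp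

end Stmt14
end

section
/- Sharp-threshold analysis lemma. Let x₀ > 0 and M > 0, and let (f_n)_{n≥0} be a pointwise convergent sequence of non-decreasing differentiable functions f_n : [0,x₀] → [0,M] with f_0(x) > 0 for all x, which satisfy, for all n ≥ 1 and all x ∈ [0,x₀], f_n'(x) ≥ (n/Σ_n(x)) · f_n(x), where Σ_n = ∑_{k=0}^{n−1} f_k. Then there exists x₁ ∈ [0,x₀] such that: (P1) for every x < x₁ there exists c_x > 0 such that f_n(x) ≤ exp(−c_x n) for all sufficiently large n; and (P2) for every x ∈ (x₁, x₀], the pointwise limit f = lim_{n→∞} f_n satisfies f(x) ≥ x − x₁. -/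
/-!
The differential inequality makes `f_n(t) * exp (-n t / Σ_n(v))` non-decreasing on `[0, v]`, so
`f_n(u) ≤ M exp (-n (v - u) / Σ_n(v))` for `u ≤ v`. Integrated against the telescoping bound
`log Σ_{k+1} - log Σ_k ≤ f_k / Σ_k ≤ f_k' / k`, it also gives
`(z - y) log Σ_n(y) ≤ ∑_{1 ≤ k < n} (f_k(z) - f_k(y)) / k + O(1)` for `y ≤ z`.

Take `x₁` to be the supremum of the points `y` with `Σ_n(y) ≤ n ^ α` eventually, for some
`α < 1`. Below such a `y` the first bound makes `f_n` stretched-exponentially small, so `Σ_n`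
stays bounded a little further down, and the first bound applied once more gives exponential
decay. Above `x₁`, `Σ_n(y) > n ^ β` infinitely often for every `β < 1`, while the right-hand side
of the second bound is at most `(L + ε) log n` when `f_n(z) → L`; hence `z - y ≤ L`.
-/

namespace Stmt15

open Set Filter Topology Real

theorem monotoneOn_Icc_of_hasDerivWithinAt_nonneg {g g' : ℝ → ℝ} {a b : ℝ}
    (hg : ∀ t ∈ Icc a b, HasDerivWithinAt g (g' t) (Icc a b) t)
    (hg' : ∀ t ∈ Icc a b, 0 ≤ g' t) : MonotoneOn g (Icc a b) :=
  monotoneOn_of_hasDerivWithinAt_nonneg (convex_Icc a b)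
    (fun t ht => (hg t ht).continuousWithinAt)
    (fun t ht => (hg t (interior_subset ht)).mono interior_subset)
    (fun t ht => hg' t (interior_subset ht))

theorem mul_sub_le_sub_of_le_hasDerivWithinAt {g g' : ℝ → ℝ} {a b C : ℝ} (hab : a ≤ b)
    (hg : ∀ t ∈ Icc a b, HasDerivWithinAt g (g' t) (Icc a b) t)
    (hC : ∀ t ∈ Icc a b, C ≤ g' t) : C * (b - a) ≤ g b - g a := by
  have hmono : MonotoneOn (fun t => g t - C * t) (Icc a b) :=
    monotoneOn_Icc_of_hasDerivWithinAt_nonneg (g' := fun t => g' t - C)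
      (fun t ht => by simpa using (hg t ht).fun_sub ((hasDerivWithinAt_id t _).const_mul C))
      (fun t ht => sub_nonneg.2 (hC t ht))
  have := hmono (left_mem_Icc.2 hab) (right_mem_Icc.2 hab) hab
  simp only at this
  linarith

theorem mul_exp_le_of_mul_le_hasDerivWithinAt {g g' : ℝ → ℝ} {a b c : ℝ} (hab : a ≤ b)
    (hg : ∀ t ∈ Icc a b, HasDerivWithinAt g (g' t) (Icc a b) t)
    (hc : ∀ t ∈ Icc a b, c * g t ≤ g' t) : g a * exp (c * (b - a)) ≤ g b := by
  have hmono : MonotoneOn (fun t => g t * exp (-(c * t))) (Icc a b) := by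
    refine monotoneOn_Icc_of_hasDerivWithinAt_nonneg
      (g' := fun t => (g' t - c * g t) * exp (-(c * t))) (fun t ht => ?_)
      (fun t ht => mul_nonneg (sub_nonneg.2 (hc t ht)) (exp_pos _).le)
    have hexp : HasDerivWithinAt (fun t => exp (-(c * t))) (exp (-(c * t)) * -c) (Icc a b) t := by
      simpa using ((hasDerivWithinAt_id t _).const_mul c).neg.exp
    exact ((hg t ht).fun_mul hexp).congr_deriv (by ring)
  have h := hmono (left_mem_Icc.2 hab) (right_mem_Icc.2 hab) hab
  calc g a * exp (c * (b - a)) = g a * exp (-(c * a)) * exp (c * b) := by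
        rw [mul_assoc, ← exp_add, mul_sub]; congr 2; ring
    _ ≤ g b * exp (-(c * b)) * exp (c * b) := by gcongr
    _ = g b := by rw [mul_assoc, ← exp_add]; simp

theorem log_add_sub_log_le {a b : ℝ} (ha : 0 < a) (hb : 0 ≤ b) : log (a + b) - log a ≤ b / a := by
  rw [← log_div (by positivity) ha.ne']
  calc log ((a + b) / a) ≤ (a + b) / a - 1 := log_le_sub_one_of_pos (by positivity)
    _ = b / a := by field_simp; ring

theorem sum_range_pos {a : ℕ → ℝ} (ha : ∀ k, 0 ≤ a k) (ha₀ : 0 < a 0) {n : ℕ} (hn : 1 ≤ n) :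
    0 < ∑ k ∈ Finset.range n, a k :=
  Finset.sum_pos' (fun k _ => ha k) ⟨0, Finset.mem_range.2 hn, ha₀⟩

theorem log_sum_range_sub_log_le {a : ℕ → ℝ} (ha : ∀ k, 0 ≤ a k) (ha₀ : 0 < a 0) {n : ℕ}
    (hn : 1 ≤ n) :
    log (∑ k ∈ Finset.range n, a k) - log (a 0) ≤
      ∑ k ∈ Finset.Ico 1 n, a k / ∑ j ∈ Finset.range k, a j := by
  induction n, hn using Nat.le_induction with
  | base => simp
  | succ m hm ih =>
    rw [Finset.sum_Ico_succ_top hm, Finset.sum_range_succ]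
    have := log_add_sub_log_le (sum_range_pos ha ha₀ hm) (ha m)
    linarith

theorem sum_Ico_one_inv_le_one_add_log (n : ℕ) :
    ∑ k ∈ Finset.Ico 1 n, (k : ℝ)⁻¹ ≤ 1 + log n := by
  calc ∑ k ∈ Finset.Ico 1 n, (k : ℝ)⁻¹ ≤ ∑ k ∈ Finset.Icc 1 n, (k : ℝ)⁻¹ :=
        Finset.sum_le_sum_of_subset_of_nonneg Finset.Ico_subset_Icc_self
          (fun k _ _ => by positivity)
    _ = harmonic n := by simp [harmonic_eq_sum_Icc]
    _ ≤ 1 + log n := harmonic_le_one_add_log n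

theorem eventually_sum_Ico_div_le_mul_log {a : ℕ → ℝ} {L ε : ℝ} (ha : ∀ k, 0 ≤ a k)
    (hL : Tendsto a atTop (𝓝 L)) (hε : 0 < ε) :
    ∀ᶠ n : ℕ in atTop, ∑ k ∈ Finset.Ico 1 n, a k / k ≤ (L + ε) * log n := by
  have hL₀ : 0 ≤ L := ge_of_tendsto' hL ha
  obtain ⟨K, hK⟩ := eventually_atTop.1
    (hL.eventually (ge_mem_nhds (lt_add_of_pos_right L (half_pos hε))))
  set B := ∑ k ∈ Finset.Ico 1 (K + 1), a k / k
  have hlog : Tendsto (fun n : ℕ => log n) atTop atTop :=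
    tendsto_log_atTop.comp tendsto_natCast_atTop_atTop
  filter_upwards [eventually_ge_atTop (K + 1),
    hlog.eventually_ge_atTop ((B + L + ε / 2) / (ε / 2))] with n hKn hn
  have htail : ∑ k ∈ Finset.Ico (K + 1) n, a k / k ≤ (L + ε / 2) * (1 + log n) :=
    calc ∑ k ∈ Finset.Ico (K + 1) n, a k / k
        ≤ ∑ k ∈ Finset.Ico (K + 1) n, (L + ε / 2) * (k : ℝ)⁻¹ :=
          Finset.sum_le_sum fun k hk => by
            rw [div_eq_mul_inv]
            gcongr
            exact hK k (by grind)
      _ ≤ (L + ε / 2) * ∑ k ∈ Finset.Ico 1 n, (k : ℝ)⁻¹ := by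
          rw [← Finset.mul_sum]
          gcongr
          omega
      _ ≤ (L + ε / 2) * (1 + log n) := by
          gcongr
          exact sum_Ico_one_inv_le_one_add_log n
  rw [← Finset.sum_Ico_consecutive _ (by omega : 1 ≤ K + 1) hKn]
  rw [div_le_iff₀ (half_pos hε)] at hn
  linarith

theorem le_of_frequently_mul_sub_le {a b c : ℝ} (h : ∃ᶠ s in atTop, a * s - b ≤ c * s) :
    a ≤ c := by
  by_contra! hca
  obtain ⟨s, hs, hbs⟩ := (h.and_eventually (eventually_gt_atTop (b / (a - c)))).exists
  rw [div_lt_iff₀ (sub_pos.2 hca)] at hbs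
  linarith

theorem summable_exp_neg_mul_rpow {d r : ℝ} (hd : 0 < d) (hr : 0 < r) :
    Summable fun k : ℕ => exp (-d * (k : ℝ) ^ r) := by
  have hcast : Tendsto (fun k : ℕ => (k : ℝ) ^ r) atTop atTop :=
    (tendsto_rpow_atTop hr).comp tendsto_natCast_atTop_atTop
  refine summable_of_isBigO_nat (g := fun k : ℕ => (k : ℝ) ^ (-2 : ℝ))
    (summable_nat_rpow.2 (by norm_num)) ?_
  refine ((isLittleO_exp_neg_mul_rpow_atTop hd (-2 / r)).comp_tendsto hcast).isBigO.congr_right ?_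
  intro k
  simp only [Function.comp_apply, ← rpow_mul (Nat.cast_nonneg k)]
  congr 1
  field_simp

theorem eventually_mul_exp_neg_mul_le (M : ℝ) {a : ℝ} (ha : 0 < a) :
    ∀ᶠ n : ℕ in atTop, M * exp (-a * n) ≤ exp (-(a / 2) * n) := by
  have hdecay : Tendsto (fun n : ℕ => M * exp (-(a / 2) * n)) atTop (𝓝 0) := by
    simpa using (tendsto_exp_neg_atTop_nhds_zero.comp
      ((tendsto_natCast_atTop_atTop).const_mul_atTop (half_pos ha))).const_mul M
  filter_upwards [hdecay.eventually (ge_mem_nhds zero_lt_one)] with n hn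
  calc M * exp (-a * n) = M * exp (-(a / 2) * n) * exp (-(a / 2) * n) := by
        rw [mul_assoc, ← exp_add]; ring_nf
    _ ≤ exp (-(a / 2) * n) := mul_le_of_le_one_left (exp_pos _).le hn

theorem div_le_div_of_div_mul_le {a d n S : ℝ} (hn : 0 < n) (h : n / S * a ≤ d) :
    a / S ≤ d / n := by
  rw [le_div_iff₀ hn]
  calc a / S * n = n / S * a := by ring
    _ ≤ d := h

section DifferentialInequality

variable {x₀ : ℝ} {f f' : ℕ → ℝ → ℝ}

theorem le_mul_exp_neg_of_le_deriv
    (hmono : ∀ n, MonotoneOn (f n) (Icc 0 x₀))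
    (hnonneg : ∀ n, ∀ x ∈ Icc 0 x₀, 0 ≤ f n x)
    (hf0 : ∀ x ∈ Icc 0 x₀, 0 < f 0 x)
    (hderiv : ∀ n, ∀ x ∈ Icc 0 x₀, HasDerivWithinAt (f n) (f' n x) (Icc 0 x₀) x)
    (hineq : ∀ n : ℕ, 1 ≤ n → ∀ x ∈ Icc 0 x₀,
      (n : ℝ) / (∑ k ∈ Finset.range n, f k x) * f n x ≤ f' n x)
    {n : ℕ} (hn : 1 ≤ n) {u v : ℝ} (hu : 0 ≤ u) (huv : u ≤ v) (hv : v ≤ x₀) :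
    f n u ≤ f n v * exp (-(n * (v - u) / ∑ k ∈ Finset.range n, f k v)) := by
  have hsub : Icc u v ⊆ Icc 0 x₀ := Icc_subset_Icc hu hv
  have hvI : v ∈ Icc 0 x₀ := hsub (right_mem_Icc.2 huv)
  have hSpos : ∀ t ∈ Icc 0 x₀, 0 < ∑ k ∈ Finset.range n, f k t := fun t ht =>
    sum_range_pos (fun k => hnonneg k t ht) (hf0 t ht) hn
  have hgrowth := mul_exp_le_of_mul_le_hasDerivWithinAt (c := n / ∑ k ∈ Finset.range n, f k v)
    huv (fun t ht => (hderiv n t (hsub ht)).mono hsub) fun t ht => by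
      have htI := hsub ht
      calc (n : ℝ) / (∑ k ∈ Finset.range n, f k v) * f n t
          ≤ n / (∑ k ∈ Finset.range n, f k t) * f n t := by
            gcongr with k
            · exact hnonneg n t htI
            · exact hSpos t htI
            · exact hmono k htI hvI ht.2
        _ ≤ f' n t := hineq n hn t htI
  calc f n u ≤ f n v / exp (n / (∑ k ∈ Finset.range n, f k v) * (v - u)) :=
        (le_div_iff₀ (exp_pos _)).2 hgrowth
    _ = f n v * exp (-(n * (v - u) / ∑ k ∈ Finset.range n, f k v)) := by
        rw [div_eq_mul_inv, ← exp_neg, div_mul_eq_mul_div]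

theorem mul_log_sub_le_sum_Ico_div
    (hmono : ∀ n, MonotoneOn (f n) (Icc 0 x₀))
    (hnonneg : ∀ n, ∀ x ∈ Icc 0 x₀, 0 ≤ f n x)
    (hf0 : ∀ x ∈ Icc 0 x₀, 0 < f 0 x)
    (hderiv : ∀ n, ∀ x ∈ Icc 0 x₀, HasDerivWithinAt (f n) (f' n x) (Icc 0 x₀) x)
    (hineq : ∀ n : ℕ, 1 ≤ n → ∀ x ∈ Icc 0 x₀,
      (n : ℝ) / (∑ k ∈ Finset.range n, f k x) * f n x ≤ f' n x)
    {n : ℕ} (hn : 1 ≤ n) {y z : ℝ} (hy : 0 ≤ y) (hyz : y ≤ z) (hz : z ≤ x₀) :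
    (z - y) * (log (∑ k ∈ Finset.range n, f k y) - log (f 0 z)) ≤
      ∑ k ∈ Finset.Ico 1 n, (f k z - f k y) / k := by
  have hsub : Icc y z ⊆ Icc 0 x₀ := Icc_subset_Icc hy hz
  have hSpos : ∀ t ∈ Icc 0 x₀, ∀ m, 1 ≤ m → 0 < ∑ k ∈ Finset.range m, f k t := fun t ht m hm =>
    sum_range_pos (fun k => hnonneg k t ht) (hf0 t ht) hm
  have key := mul_sub_le_sub_of_le_hasDerivWithinAt
    (g := fun t => ∑ k ∈ Finset.Ico 1 n, f k t / k) hyz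
    (fun t ht => HasDerivWithinAt.fun_sum fun k _ => ((hderiv k t (hsub ht)).mono hsub).div_const _)
    fun t ht => by
      have htI := hsub ht
      calc log (∑ k ∈ Finset.range n, f k y) - log (f 0 z)
          ≤ log (∑ k ∈ Finset.range n, f k t) - log (f 0 t) := by
            gcongr with k
            · exact hSpos y (hsub (left_mem_Icc.2 hyz)) n hn
            · exact hmono k (hsub (left_mem_Icc.2 hyz)) htI ht.1
            · exact hf0 t htI
            · exact hmono 0 htI (hsub (right_mem_Icc.2 hyz)) ht.2
        _ ≤ ∑ k ∈ Finset.Ico 1 n, f k t / ∑ j ∈ Finset.range k, f j t :=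
            log_sum_range_sub_log_le (fun k => hnonneg k t htI) (hf0 t htI) hn
        _ ≤ ∑ k ∈ Finset.Ico 1 n, f' k t / k := Finset.sum_le_sum fun k hk => by
            have hk : 1 ≤ k := (Finset.mem_Ico.1 hk).1
            exact div_le_div_of_div_mul_le (by exact_mod_cast hk) (hineq k hk t htI)
  rw [mul_comm]
  simpa only [Finset.sum_sub_distrib, sub_div] using key

end DifferentialInequality

def subcriticalSet (x₀ : ℝ) (f : ℕ → ℝ → ℝ) : Set ℝ :=
  {y ∈ Icc 0 x₀ | ∃ α < (1 : ℝ), ∀ᶠ n : ℕ in atTop, ∑ k ∈ Finset.range n, f k y ≤ (n : ℝ) ^ α}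

/-- `0` is inserted so that the supremum is not taken over a possibly empty set. -/
noncomputable def threshold (x₀ : ℝ) (f : ℕ → ℝ → ℝ) : ℝ :=
  sSup (insert 0 (subcriticalSet x₀ f))

section Threshold

variable {x₀ M : ℝ} {f f' : ℕ → ℝ → ℝ}

theorem bddAbove_insert_subcriticalSet : BddAbove (insert 0 (subcriticalSet x₀ f)) :=
  (bddAbove_Icc.mono (sep_subset _ _)).insert 0

theorem threshold_nonneg : 0 ≤ threshold x₀ f :=
  le_csSup bddAbove_insert_subcriticalSet (mem_insert 0 _)

theorem threshold_mem_Icc (hx₀ : 0 ≤ x₀) : threshold x₀ f ∈ Icc 0 x₀ :=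
  ⟨threshold_nonneg,
    csSup_le (insert_nonempty 0 _) (forall_mem_insert.2 ⟨hx₀, fun _ hy => hy.1.2⟩)⟩

theorem notMem_subcriticalSet_of_threshold_lt {y : ℝ} (hy : threshold x₀ f < y) :
    y ∉ subcriticalSet x₀ f := fun hyS =>
  hy.not_ge (le_csSup bddAbove_insert_subcriticalSet (mem_insert_of_mem 0 hyS))

theorem summable_of_lt_mem_subcriticalSet
    (hmono : ∀ n, MonotoneOn (f n) (Icc 0 x₀))
    (hrange : ∀ n, ∀ x ∈ Icc 0 x₀, f n x ∈ Icc 0 M)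
    (hf0 : ∀ x ∈ Icc 0 x₀, 0 < f 0 x)
    (hderiv : ∀ n, ∀ x ∈ Icc 0 x₀, HasDerivWithinAt (f n) (f' n x) (Icc 0 x₀) x)
    (hineq : ∀ n : ℕ, 1 ≤ n → ∀ x ∈ Icc 0 x₀,
      (n : ℝ) / (∑ k ∈ Finset.range n, f k x) * f n x ≤ f' n x)
    {u y : ℝ} (hu : 0 ≤ u) (huy : u < y) (hy : y ∈ subcriticalSet x₀ f) :
    Summable fun k => f k u := by
  obtain ⟨hyI, α, hα, hgrowth⟩ := hy
  have huI : u ∈ Icc 0 x₀ := ⟨hu, huy.le.trans hyI.2⟩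
  refine Summable.of_norm_bounded_eventually_nat
    ((summable_exp_neg_mul_rpow (sub_pos.2 huy) (sub_pos.2 hα)).mul_left M) ?_
  filter_upwards [hgrowth, eventually_ge_atTop 1] with k hk hk₁
  have hk₀ : (0 : ℝ) < k := by exact_mod_cast hk₁
  have hS : 0 < ∑ j ∈ Finset.range k, f j y :=
    sum_range_pos (fun j => (hrange j y hyI).1) (hf0 y hyI) hk₁
  have hrate : (y - u) * (k : ℝ) ^ (1 - α) ≤ k * (y - u) / ∑ j ∈ Finset.range k, f j y := by
    rw [le_div_iff₀ hS]
    calc (y - u) * (k : ℝ) ^ (1 - α) * ∑ j ∈ Finset.range k, f j y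
        ≤ (y - u) * (k : ℝ) ^ (1 - α) * (k : ℝ) ^ α := by gcongr
      _ = k * (y - u) := by rw [mul_assoc, ← rpow_add hk₀, sub_add_cancel, rpow_one, mul_comm]
  rw [Real.norm_of_nonneg (hrange k u huI).1]
  calc f k u ≤ f k y * exp (-(k * (y - u) / ∑ j ∈ Finset.range k, f j y)) :=
        le_mul_exp_neg_of_le_deriv hmono (fun n x hx => (hrange n x hx).1) hf0 hderiv hineq
          hk₁ hu huy.le hyI.2
    _ ≤ M * exp (-(y - u) * (k : ℝ) ^ (1 - α)) := by
        gcongr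
        · exact (hrange k y hyI).1.trans (hrange k y hyI).2
        · exact (hrange k y hyI).2
        · linarith

theorem exists_exp_decay_of_summable
    (hmono : ∀ n, MonotoneOn (f n) (Icc 0 x₀))
    (hrange : ∀ n, ∀ x ∈ Icc 0 x₀, f n x ∈ Icc 0 M)
    (hf0 : ∀ x ∈ Icc 0 x₀, 0 < f 0 x)
    (hderiv : ∀ n, ∀ x ∈ Icc 0 x₀, HasDerivWithinAt (f n) (f' n x) (Icc 0 x₀) x)
    (hineq : ∀ n : ℕ, 1 ≤ n → ∀ x ∈ Icc 0 x₀,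
      (n : ℝ) / (∑ k ∈ Finset.range n, f k x) * f n x ≤ f' n x)
    {x u : ℝ} (hx : 0 ≤ x) (hxu : x < u) (hu : u ≤ x₀) (hsum : Summable fun k => f k u) :
    ∃ c > 0, ∀ᶠ n : ℕ in atTop, f n x ≤ exp (-c * n) := by
  have huI : u ∈ Icc 0 x₀ := ⟨hx.trans hxu.le, hu⟩
  set C := ∑' k, f k u
  have hC : ∀ n, ∑ k ∈ Finset.range n, f k u ≤ C := fun n =>
    hsum.sum_le_tsum _ fun k _ => (hrange k u huI).1
  have hS : ∀ n, 1 ≤ n → 0 < ∑ k ∈ Finset.range n, f k u := fun n hn =>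
    sum_range_pos (fun k => (hrange k u huI).1) (hf0 u huI) hn
  have ha : 0 < (u - x) / C := div_pos (sub_pos.2 hxu) ((hS 1 le_rfl).trans_le (hC 1))
  refine ⟨(u - x) / C / 2, half_pos ha, ?_⟩
  filter_upwards [eventually_mul_exp_neg_mul_le M ha, eventually_ge_atTop 1] with n hn hn₁
  refine le_trans ?_ hn
  calc f n x ≤ f n u * exp (-(n * (u - x) / ∑ k ∈ Finset.range n, f k u)) :=
        le_mul_exp_neg_of_le_deriv hmono (fun n x hx => (hrange n x hx).1) hf0 hderiv hineq
          hn₁ hx hxu.le hu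
    _ ≤ M * exp (-((u - x) / C) * n) := by
        rw [neg_mul, div_mul_eq_mul_div, mul_comm (u - x)]
        gcongr
        · exact (hrange n u huI).1.trans (hrange n u huI).2
        · exact (hrange n u huI).2
        · exact hS n hn₁
        · exact hC n

theorem exists_exp_decay_of_lt_threshold
    (hmono : ∀ n, MonotoneOn (f n) (Icc 0 x₀))
    (hrange : ∀ n, ∀ x ∈ Icc 0 x₀, f n x ∈ Icc 0 M)
    (hf0 : ∀ x ∈ Icc 0 x₀, 0 < f 0 x)
    (hderiv : ∀ n, ∀ x ∈ Icc 0 x₀, HasDerivWithinAt (f n) (f' n x) (Icc 0 x₀) x)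
    (hineq : ∀ n : ℕ, 1 ≤ n → ∀ x ∈ Icc 0 x₀,
      (n : ℝ) / (∑ k ∈ Finset.range n, f k x) * f n x ≤ f' n x)
    {x : ℝ} (hx : x ∈ Icc 0 x₀) (hxt : x < threshold x₀ f) :
    ∃ c > 0, ∀ᶠ n : ℕ in atTop, f n x ≤ exp (-c * n) := by
  obtain ⟨y, hy, hxy⟩ := exists_lt_of_lt_csSup (insert_nonempty 0 _) hxt
  rcases hy with rfl | hyS
  · exact absurd hx.1 hxy.not_ge
  have hsum := summable_of_lt_mem_subcriticalSet hmono hrange hf0 hderiv hineq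
    (by linarith [hx.1]) (add_div_two_lt_right.2 hxy) hyS
  exact exists_exp_decay_of_summable hmono hrange hf0 hderiv hineq hx.1
    (left_lt_add_div_two.2 hxy) (by linarith [hyS.1.2]) hsum

theorem mul_le_of_frequently_rpow_lt_sum
    (hmono : ∀ n, MonotoneOn (f n) (Icc 0 x₀))
    (hnonneg : ∀ n, ∀ x ∈ Icc 0 x₀, 0 ≤ f n x)
    (hf0 : ∀ x ∈ Icc 0 x₀, 0 < f 0 x)
    (hderiv : ∀ n, ∀ x ∈ Icc 0 x₀, HasDerivWithinAt (f n) (f' n x) (Icc 0 x₀) x)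
    (hineq : ∀ n : ℕ, 1 ≤ n → ∀ x ∈ Icc 0 x₀,
      (n : ℝ) / (∑ k ∈ Finset.range n, f k x) * f n x ≤ f' n x)
    {x y L β : ℝ} (hy : y ∈ Icc 0 x₀) (hyx : y < x) (hx : x ≤ x₀)
    (hL : Tendsto (fun n => f n x) atTop (𝓝 L))
    (hfreq : ∃ᶠ n : ℕ in atTop, (n : ℝ) ^ β < ∑ k ∈ Finset.range n, f k y) :
    (x - y) * β ≤ L := by
  have hxI : x ∈ Icc 0 x₀ := ⟨hy.1.trans hyx.le, hx⟩
  refine le_of_forall_pos_le_add fun ε hε =>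
    le_of_frequently_mul_sub_le (b := (x - y) * log (f 0 x)) ?_
  refine (tendsto_log_atTop.comp tendsto_natCast_atTop_atTop).frequently ?_
  refine (hfreq.and_eventually ((eventually_sum_Ico_div_le_mul_log
    (fun k => hnonneg k x hxI) hL hε).and (eventually_ge_atTop 1))).mono ?_
  rintro n ⟨hgrowth, hsum, hn⟩
  have hn₀ : (0 : ℝ) < n := by exact_mod_cast hn
  have hlog : β * log n ≤ log (∑ k ∈ Finset.range n, f k y) := by
    rw [← log_rpow hn₀]
    exact log_le_log (rpow_pos_of_pos hn₀ β) hgrowth.le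
  calc (x - y) * β * log n - (x - y) * log (f 0 x)
      = (x - y) * (β * log n - log (f 0 x)) := by ring
    _ ≤ (x - y) * (log (∑ k ∈ Finset.range n, f k y) - log (f 0 x)) := by gcongr
    _ ≤ ∑ k ∈ Finset.Ico 1 n, (f k x - f k y) / k :=
        mul_log_sub_le_sum_Ico_div hmono hnonneg hf0 hderiv hineq hn hy.1 hyx.le hx
    _ ≤ ∑ k ∈ Finset.Ico 1 n, f k x / k := Finset.sum_le_sum fun k _ => by
        gcongr
        linarith [hnonneg k y hy]
    _ ≤ (L + ε) * log n := hsum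

theorem sub_le_of_notMem_subcriticalSet
    (hmono : ∀ n, MonotoneOn (f n) (Icc 0 x₀))
    (hnonneg : ∀ n, ∀ x ∈ Icc 0 x₀, 0 ≤ f n x)
    (hf0 : ∀ x ∈ Icc 0 x₀, 0 < f 0 x)
    (hderiv : ∀ n, ∀ x ∈ Icc 0 x₀, HasDerivWithinAt (f n) (f' n x) (Icc 0 x₀) x)
    (hineq : ∀ n : ℕ, 1 ≤ n → ∀ x ∈ Icc 0 x₀,
      (n : ℝ) / (∑ k ∈ Finset.range n, f k x) * f n x ≤ f' n x)
    {x y L : ℝ} (hy : y ∈ Icc 0 x₀) (hyS : y ∉ subcriticalSet x₀ f) (hyx : y < x) (hx : x ≤ x₀)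
    (hL : Tendsto (fun n => f n x) atTop (𝓝 L)) : x - y ≤ L := by
  have hβ : ∀ β < (1 : ℝ), (x - y) * β ≤ L := fun β hβ =>
    mul_le_of_frequently_rpow_lt_sum hmono hnonneg hf0 hderiv hineq hy hyx hx hL <| by
      by_contra h
      exact hyS ⟨hy, β, hβ, (not_frequently.1 h).mono fun n hn => not_lt.1 hn⟩
  refine le_of_forall_lt_imp_le_of_dense fun t ht => ?_
  have hxy : 0 < x - y := sub_pos.2 hyx
  calc t = (x - y) * (t / (x - y)) := by field_simp
    _ ≤ L := hβ _ ((div_lt_one hxy).2 ht)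

theorem sub_threshold_le_of_tendsto
    (hmono : ∀ n, MonotoneOn (f n) (Icc 0 x₀))
    (hnonneg : ∀ n, ∀ x ∈ Icc 0 x₀, 0 ≤ f n x)
    (hf0 : ∀ x ∈ Icc 0 x₀, 0 < f 0 x)
    (hderiv : ∀ n, ∀ x ∈ Icc 0 x₀, HasDerivWithinAt (f n) (f' n x) (Icc 0 x₀) x)
    (hineq : ∀ n : ℕ, 1 ≤ n → ∀ x ∈ Icc 0 x₀,
      (n : ℝ) / (∑ k ∈ Finset.range n, f k x) * f n x ≤ f' n x)
    {x L : ℝ} (hx : x ∈ Icc 0 x₀) (htx : threshold x₀ f < x)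
    (hL : Tendsto (fun n => f n x) atTop (𝓝 L)) : x - threshold x₀ f ≤ L := by
  by_contra! hlt
  obtain ⟨y, hty, hy⟩ := exists_between (lt_min htx (by linarith) : threshold x₀ f < min x (x - L))
  have hyx : y < x := hy.trans_le (min_le_left _ _)
  have := sub_le_of_notMem_subcriticalSet hmono hnonneg hf0 hderiv hineq
    ⟨threshold_nonneg.trans hty.le, hyx.le.trans hx.2⟩
    (notMem_subcriticalSet_of_threshold_lt hty) hyx hx.2 hL
  linarith [hy.trans_le (min_le_right _ _)]

end Threshold

theorem sharp_threshold_lemma_general (x₀ M : ℝ) (hx₀ : 0 < x₀)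
    (f f' : ℕ → ℝ → ℝ)
    (hmono : ∀ n, MonotoneOn (f n) (Set.Icc 0 x₀))
    (hrange : ∀ n, ∀ x ∈ Set.Icc 0 x₀, f n x ∈ Set.Icc 0 M)
    (hf0 : ∀ x ∈ Set.Icc 0 x₀, 0 < f 0 x)
    (hderiv : ∀ n, ∀ x ∈ Set.Icc 0 x₀, HasDerivWithinAt (f n) (f' n x) (Set.Icc 0 x₀) x)
    (hineq : ∀ n : ℕ, 1 ≤ n → ∀ x ∈ Set.Icc 0 x₀,
      (n : ℝ) / (∑ k ∈ Finset.range n, f k x) * f n x ≤ f' n x) :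
    ∃ x₁ ∈ Set.Icc 0 x₀,
      (∀ x ∈ Set.Icc 0 x₀, x < x₁ → ∃ c > (0 : ℝ),
        ∀ᶠ n : ℕ in Filter.atTop, f n x ≤ Real.exp (-c * n)) ∧
      (∀ x ∈ Set.Icc 0 x₀, x₁ < x → ∀ L : ℝ,
        Filter.Tendsto (fun n => f n x) Filter.atTop (nhds L) → x - x₁ ≤ L) := by
  have hnonneg : ∀ n, ∀ x ∈ Set.Icc 0 x₀, 0 ≤ f n x := fun n x hx => (hrange n x hx).1
  exact ⟨threshold x₀ f, threshold_mem_Icc hx₀.le,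
    fun x hx hxt => exists_exp_decay_of_lt_threshold hmono hrange hf0 hderiv hineq hx hxt,
    fun x hx htx L hL => sub_threshold_le_of_tendsto hmono hnonneg hf0 hderiv hineq hx htx hL⟩

/-- Sharp-threshold analysis lemma: a convergent sequence of non-decreasing
differentiable functions `f_n : [0,x₀] → [0,M]` satisfying
`f_n' ≥ (n/Σ_n) f_n` with `Σ_n = ∑_{k<n} f_k` admits a threshold `x₁` below which
`f_n` decays exponentially and above which the limit satisfies `f(x) ≥ x - x₁`. -/
theorem sharp_threshold_lemma (x₀ M : ℝ) (hx₀ : 0 < x₀) (hM : 0 < M)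
    (f f' : ℕ → ℝ → ℝ)
    (hmono : ∀ n, MonotoneOn (f n) (Set.Icc 0 x₀))
    (hrange : ∀ n, ∀ x ∈ Set.Icc 0 x₀, f n x ∈ Set.Icc 0 M)
    (hf0 : ∀ x ∈ Set.Icc 0 x₀, 0 < f 0 x)
    (hderiv : ∀ n, ∀ x ∈ Set.Icc 0 x₀, HasDerivWithinAt (f n) (f' n x) (Set.Icc 0 x₀) x)
    (hconv : ∀ x ∈ Set.Icc 0 x₀, ∃ L : ℝ,
      Filter.Tendsto (fun n => f n x) Filter.atTop (nhds L))
    (hineq : ∀ n : ℕ, 1 ≤ n → ∀ x ∈ Set.Icc 0 x₀,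
      (n : ℝ) / (∑ k ∈ Finset.range n, f k x) * f n x ≤ f' n x) :
    ∃ x₁ ∈ Set.Icc 0 x₀,
      (∀ x ∈ Set.Icc 0 x₀, x < x₁ → ∃ c > (0 : ℝ),
        ∀ᶠ n : ℕ in Filter.atTop, f n x ≤ Real.exp (-c * n)) ∧
      (∀ x ∈ Set.Icc 0 x₀, x₁ < x → ∀ L : ℝ,
        Filter.Tendsto (fun n => f n x) Filter.atTop (nhds L) → x - x₁ ≤ L) :=
  sharp_threshold_lemma_general x₀ M hx₀ f f' hmono hrange hf0 hderiv hineq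

end Stmt15
end

section
/- OSSS inequality for Bernoulli percolation. Let E be a finite set, p ∈ [0,1], and ℙ_p the product Bernoulli(p) measure on {0,1}^E. Let f : {0,1}^E → [0,1] be an increasing function and T any decision tree on E. Then Var_p(f) ≤ 2 · ∑_{e∈E} δ_e(f,T) · Cov_p(f, ω_e), where δ_e(f,T) is the revealment of e and Var_p, Cov_p are the variance and covariance under ℙ_p. -/
/-!
Let `ω, ω̃` be independent samples and let `η_t = mix ω ω̃ t` agree with `ω̃` on the coordinates
revealed by the tree run on `ω` before time `min t τ(ω)`, and with `ω` elsewhere. The revealed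
set is determined by the values of `ω` on it, so swapping `ω` and `ω̃` on it is a
measure-preserving involution of the pair. At `t = n` the swapped first component still has the
same `f`-value as `ω`, whence `E[f(ω) f(η_n)] = (E f)²` and, as `0 ≤ f ≤ 1`,
`Var f = E[f(ω)(f(ω) - f(η_n))] ≤ E|f(ω) - f(η_n)|`. Telescoping over `t`, the step from `η_t`
to `η_{t+1}` only resamples the queried coordinate `e_t`, so by monotonicity it costs at most
`∇_e f(η_t) = f(η_t with e set to 1) - f(η_t with e set to 0)` on the event
`{e_t = e, t < τ, ω_e ≠ ω̃_e}`. The involution at time `t` turns `η_t` into `ω̃` and preserves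
`{e_t = e, t < τ}`, an event that does not depend on `ω_e`; hence the expectation factorises as
`2p(1-p) ℙ[e_t = e, t < τ] E[∇_e f]`. Summing over `t` gives `δ_e`, and
`p(1-p) E[∇_e f] = Cov(f, ω_e)`.
-/

open scoped BigOperators Classical

namespace Stmt16

variable {E : Type} [Fintype E] [DecidableEq E]

/-- Bernoulli(p) product weight of a configuration. -/
noncomputable def bern (p : ℝ) (ω : E → Bool) : ℝ := ∏ e : E, if ω e then p else 1 - p

/-- Expectation under the Bernoulli(p) product measure. -/
noncomputable def Ep (p : ℝ) (g : (E → Bool) → ℝ) : ℝ := ∑ ω : E → Bool, g ω * bern p ω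

/-- Probability of an event under the Bernoulli(p) product measure. -/
noncomputable def Pp (p : ℝ) (A : (E → Bool) → Prop) : ℝ :=
  ∑ ω : E → Bool, if A ω then bern p ω else 0

/-- Variance under the Bernoulli(p) product measure. -/
noncomputable def Var (p : ℝ) (g : (E → Bool) → ℝ) : ℝ :=
  Ep p (fun ω => g ω * g ω) - Ep p g * Ep p g

/-- Covariance under the Bernoulli(p) product measure. -/
noncomputable def Cov (p : ℝ) (g h : (E → Bool) → ℝ) : ℝ :=
  Ep p (fun ω => g ω * h ω) - Ep p g * Ep p h

/-- The history of the first `t` queries of the decision tree `T` run on input `ω`: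
a decision tree is given by the map `T` producing the next queried coordinate from
the list of previously queried coordinates together with their revealed values. -/
def hist (T : List (E × Bool) → E) (ω : E → Bool) : ℕ → List (E × Bool)
  | 0 => []
  | t + 1 => hist T ω t ++ [(T (hist T ω t), ω (T (hist T ω t)))]

/-- The `(t+1)`-st coordinate queried by the decision tree `T` on input `ω`. -/
def query (T : List (E × Bool) → E) (ω : E → Bool) (t : ℕ) : E := T (hist T ω t)

/-- `τ(ω)`: the first time at which the revealed coordinates determine `f`. -/
noncomputable def tau (T : List (E × Bool) → E) (f : (E → Bool) → ℝ) (ω : E → Bool) : ℕ :=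
  sInf {t : ℕ | ∀ ω' : E → Bool,
    (∀ s : ℕ, s < t → ω' (query T ω s) = ω (query T ω s)) → f ω' = f ω}

/-- The revealment `δ_e(f,T)`: the probability that `e` is queried before time `τ`. -/
noncomputable def revealment (p : ℝ) (T : List (E × Bool) → E) (f : (E → Bool) → ℝ)
    (e : E) : ℝ :=
  Pp p fun ω => ∃ t : ℕ, t < tau T f ω ∧ query T ω t = e

section Update

omit [Fintype E]

theorem update_funSplitAt_symm (e : E) (c c' : Bool) (r : {x // x ≠ e} → Bool) :
    Function.update ((Equiv.funSplitAt e Bool).symm (c, r)) e c' =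
      (Equiv.funSplitAt e Bool).symm (c', r) := by
  ext x
  by_cases hx : x = e
  · subst hx; simp
  · simp [hx]

def coordDiff (f : (E → Bool) → ℝ) (e : E) (η : E → Bool) : ℝ :=
  f (Function.update η e true) - f (Function.update η e false)

theorem coordDiff_update (f : (E → Bool) → ℝ) (e : E) (η : E → Bool) (c : Bool) :
    coordDiff f e (Function.update η e c) = coordDiff f e η := by
  simp only [coordDiff, Function.update_idem]

theorem abs_sub_update_le {f : (E → Bool) → ℝ} (hf : Monotone f) (η : E → Bool) (e : E)
    (c : Bool) : |f η - f (Function.update η e c)| ≤ if η e ≠ c then coordDiff f e η else 0 := by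
  have hmono : f (Function.update η e false) ≤ f (Function.update η e true) :=
    hf (Function.update_mono (Bool.false_le true))
  have hd : |f (Function.update η e true) - f (Function.update η e false)| = coordDiff f e η :=
    abs_of_nonneg (sub_nonneg.2 hmono)
  conv_lhs => rw [← Function.update_eq_self e η]
  cases η e <;> cases c <;> simp [hd, abs_sub_comm (f (Function.update η e false))]

end Update

section Bernoulli

variable {p : ℝ}

omit [DecidableEq E] in
theorem bern_nonneg (hp : p ∈ Set.Icc (0 : ℝ) 1) (a : E → Bool) : 0 ≤ bern p a :=
  Finset.prod_nonneg fun x _ => by cases a x <;> simp [hp.1, hp.2]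

theorem sum_bern : ∑ a : E → Bool, bern p a = 1 := by
  simp only [bern]
  rw [← Fintype.prod_sum (fun (_ : E) (c : Bool) => if c then p else 1 - p)]
  simp

theorem ep_mono (hp : p ∈ Set.Icc (0 : ℝ) 1) {F G : (E → Bool) → ℝ} (h : ∀ a, F a ≤ G a) :
    Ep p F ≤ Ep p G :=
  Finset.sum_le_sum fun a _ => mul_le_mul_of_nonneg_right (h a) (bern_nonneg hp a)

theorem ep_const (c : ℝ) : Ep p (fun _ : E → Bool => c) = c := by
  rw [Ep, ← Finset.mul_sum, sum_bern, mul_one]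

theorem ep_sub (F G : (E → Bool) → ℝ) : Ep p (fun a => F a - G a) = Ep p F - Ep p G := by
  simp only [Ep, sub_mul, Finset.sum_sub_distrib]

theorem ep_const_mul (c : ℝ) (F : (E → Bool) → ℝ) : Ep p (fun a => c * F a) = c * Ep p F := by
  simp only [Ep, Finset.mul_sum, mul_assoc]

theorem ep_mul_const (F : (E → Bool) → ℝ) (c : ℝ) : Ep p (fun a => F a * c) = Ep p F * c := by
  simp only [Ep, Finset.sum_mul, mul_right_comm]

theorem ep_sum {ι : Type*} (s : Finset ι) (F : ι → (E → Bool) → ℝ) :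
    Ep p (fun a => ∑ i ∈ s, F i a) = ∑ i ∈ s, Ep p (F i) := by
  simp only [Ep, Finset.sum_mul]
  exact Finset.sum_comm

theorem pp_eq_ep (A : (E → Bool) → Prop) : Pp p A = Ep p (fun a => if A a then 1 else 0) := by
  simp only [Pp, Ep, ite_mul, one_mul, zero_mul]

theorem bern_funSplitAt_symm (e : E) (c : Bool) (r : {x // x ≠ e} → Bool) :
    bern p ((Equiv.funSplitAt e Bool).symm (c, r)) = (if c then p else 1 - p) * bern p r := by
  rw [bern, Fintype.prod_eq_mul_prod_subtype_ne _ e]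
  congr 1
  · simp
  · exact Finset.prod_congr rfl fun x _ => by simp [x.2]

theorem ep_eq_cond_coord (e : E) (G : (E → Bool) → ℝ) :
    Ep p G = p * Ep p (fun a => G (Function.update a e true)) +
      (1 - p) * Ep p (fun a => G (Function.update a e false)) := by
  simp only [Ep, ← (Equiv.funSplitAt e Bool).symm.sum_comp, Fintype.sum_prod_type,
    Fintype.sum_bool, bern_funSplitAt_symm, update_funSplitAt_symm]
  simp only [if_true, Bool.false_eq_true, if_false, ← Finset.sum_add_distrib, Finset.mul_sum]
  exact Finset.sum_congr rfl fun r _ => by ring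

theorem ep_ep_eq_sum (F : (E → Bool) → (E → Bool) → ℝ) :
    Ep p (fun a => Ep p (F a)) =
      ∑ q : (E → Bool) × (E → Bool), F q.1 q.2 * (bern p q.1 * bern p q.2) := by
  simp only [Ep, Fintype.sum_prod_type, Finset.sum_mul]
  exact Finset.sum_congr rfl fun a _ => Finset.sum_congr rfl fun b _ => by ring

theorem bern_piecewise_mul (s : Finset E) (a b : E → Bool) :
    bern p (s.piecewise a b) * bern p (s.piecewise b a) = bern p a * bern p b := by
  simp only [bern, ← Finset.prod_mul_distrib]
  refine Finset.prod_congr rfl fun x _ => ?_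
  by_cases hx : x ∈ s <;> simp [hx, mul_comm]

theorem ep_ep_piecewise_swap {S : (E → Bool) → Finset E}
    (hS : ∀ a a', (∀ x ∈ S a, a' x = a x) → S a' = S a) (F : (E → Bool) → (E → Bool) → ℝ) :
    Ep p (fun a => Ep p fun b => F ((S a).piecewise a b) ((S a).piecewise b a)) =
      Ep p (fun a => Ep p (F a)) := by
  set σ : (E → Bool) × (E → Bool) → (E → Bool) × (E → Bool) :=
    fun q => ((S q.1).piecewise q.1 q.2, (S q.1).piecewise q.2 q.1)
  have hσ : Function.Involutive σ := by
    rintro ⟨a, b⟩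
    have hSa : S ((S a).piecewise a b) = S a :=
      hS _ _ fun x hx => Finset.piecewise_eq_of_mem _ _ _ hx
    ext x <;> by_cases hx : x ∈ S a <;> simp [σ, hSa, hx]
  rw [ep_ep_eq_sum, ep_ep_eq_sum]
  refine Eq.trans ?_ (Equiv.sum_comp hσ.toPerm fun q => F q.1 q.2 * (bern p q.1 * bern p q.2))
  refine Fintype.sum_congr _ _ fun q => ?_
  simp only [Function.Involutive.coe_toPerm, σ, bern_piecewise_mul]

theorem cov_coord_eq (f : (E → Bool) → ℝ) (e : E) :
    Cov p f (fun ω => if ω e then 1 else 0) = p * (1 - p) * Ep p (coordDiff f e) := by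
  rw [Cov, ep_eq_cond_coord e (fun ω => f ω * _),
    ep_eq_cond_coord e (fun ω => if ω e then _ else _),
    ep_eq_cond_coord e f, show coordDiff f e = fun η => _ - _ from rfl, ep_sub]
  simp only [Function.update_self, if_true, Bool.false_eq_true, if_false, mul_one, mul_zero,
    ep_const]
  ring

end Bernoulli

section DecisionTree

omit [Fintype E] [DecidableEq E]

variable (T : List (E × Bool) → E) (f : (E → Bool) → ℝ)

def AgreeOnQueries (a a' : E → Bool) (u : ℕ) : Prop :=
  ∀ s < u, a' (query T a s) = a (query T a s)

def Determined (a : E → Bool) (t : ℕ) : Prop :=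
  ∀ a', AgreeOnQueries T a a' t → f a' = f a

def RevealsAt (a : E → Bool) (t : ℕ) (e : E) : Prop :=
  t < tau T f a ∧ query T a t = e

variable {T f}

namespace AgreeOnQueries

variable {a a' a'' : E → Bool} {u : ℕ}

theorem mono (h : AgreeOnQueries T a a' u) {v : ℕ} (hvu : v ≤ u) : AgreeOnQueries T a a' v :=
  fun s hs => h s (hs.trans_le hvu)

theorem hist_eq (h : AgreeOnQueries T a a' u) : ∀ s ≤ u, hist T a' s = hist T a s
  | 0, _ => rfl
  | s + 1, hs => by
    have hq : a' (T (hist T a s)) = a (T (hist T a s)) := h s hs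
    simp only [hist, h.hist_eq s (Nat.le_of_succ_le hs), hq]

theorem query_eq (h : AgreeOnQueries T a a' u) {s : ℕ} (hs : s ≤ u) :
    query T a' s = query T a s := by
  rw [query, query, h.hist_eq s hs]

theorem symm (h : AgreeOnQueries T a a' u) : AgreeOnQueries T a' a u := fun s hs => by
  rw [h.query_eq hs.le, h s hs]

theorem trans (h : AgreeOnQueries T a a' u) (h' : AgreeOnQueries T a' a'' u) :
    AgreeOnQueries T a a'' u := fun s hs => by
  rw [← h s hs, ← h.query_eq hs.le, h' s hs]

theorem determined_iff (h : AgreeOnQueries T a a' u) {t : ℕ} (htu : t ≤ u) :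
    Determined T f a' t ↔ Determined T f a t := by
  suffices key : ∀ {a a'}, AgreeOnQueries T a a' u → Determined T f a t → Determined T f a' t from
    ⟨key h.symm, key h⟩
  intro a a' h hdet a'' h''
  exact (hdet a'' ((h.mono htu).trans h'')).trans (hdet a' (h.mono htu)).symm

end AgreeOnQueries

theorem Determined.mono {a : E → Bool} {s t : ℕ} (h : Determined T f a s) (hst : s ≤ t) :
    Determined T f a t :=
  fun a' ha' => h a' (ha'.mono hst)

end DecisionTree

section Revealed

omit [Fintype E]

variable (T : List (E × Bool) → E) (f : (E → Bool) → ℝ)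

noncomputable def revealed (a : E → Bool) (t : ℕ) : Finset E :=
  (Finset.range (min t (tau T f a))).image (query T a)

noncomputable def mix (a b : E → Bool) (t : ℕ) : E → Bool :=
  (revealed T f a t).piecewise b a

variable {T f} {a b : E → Bool} {t : ℕ}

theorem agreeOnQueries_of_eqOn_revealed {a' : E → Bool}
    (h : ∀ x ∈ revealed T f a t, a' x = a x) : AgreeOnQueries T a a' (min t (tau T f a)) :=
  fun _ hs => h _ (Finset.mem_image_of_mem _ (Finset.mem_range.2 hs))

theorem mix_zero (a b : E → Bool) : mix T f a b 0 = a := by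
  rw [mix, revealed, Nat.zero_min, Finset.range_zero, Finset.image_empty, Finset.piecewise_empty]

theorem mix_succ_of_lt (ht : t < tau T f a) :
    mix T f a b (t + 1) = Function.update (mix T f a b t) (query T a t) (b (query T a t)) := by
  rw [mix, mix, revealed, revealed, min_eq_left (Nat.succ_le_of_lt ht), min_eq_left ht.le,
    Finset.range_add_one, Finset.image_insert, Finset.piecewise_insert]

theorem mix_succ_of_le (ht : tau T f a ≤ t) : mix T f a b (t + 1) = mix T f a b t := by
  rw [mix, mix, revealed, revealed, min_eq_right ht, min_eq_right (ht.trans t.le_succ)]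

end Revealed

section StoppingTime

omit [DecidableEq E]

def QueriesDistinct (T : List (E × Bool) → E) : Prop :=
  ∀ ω : E → Bool, ∀ s t : ℕ, s < t → t < Fintype.card E → query T ω s ≠ query T ω t

variable {T : List (E × Bool) → E} {f : (E → Bool) → ℝ} (hT : QueriesDistinct T)
include hT

theorem QueriesDistinct.query_inj {a : E → Bool} {s t : ℕ} (hs : s < Fintype.card E)
    (ht : t < Fintype.card E) (h : query T a s = query T a t) : s = t := by
  by_contra hne
  rcases lt_or_gt_of_ne hne with hlt | hlt
  exacts [hT a s t hlt ht h, hT a t s hlt hs h.symm]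

theorem QueriesDistinct.determined_card (a : E → Bool) : Determined T f a (Fintype.card E) := by
  intro a' ha'
  have hinj : Function.Injective fun s : Fin (Fintype.card E) => query T a s :=
    fun s t h => Fin.ext (hT.query_inj s.2 t.2 h)
  have hsurj := (Fintype.bijective_iff_injective_and_card _).mpr ⟨hinj, by simp⟩ |>.2
  have : a' = a := funext fun x => by
    obtain ⟨s, rfl⟩ := hsurj x
    exact ha' s s.2
  rw [this]

theorem QueriesDistinct.tau_le_card (a : E → Bool) : tau T f a ≤ Fintype.card E :=
  Nat.sInf_le (hT.determined_card a)

theorem QueriesDistinct.determined_tau (a : E → Bool) : Determined T f a (tau T f a) :=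
  Nat.sInf_mem (s := {t | Determined T f a t}) ⟨_, hT.determined_card a⟩

theorem QueriesDistinct.tau_le_iff {a : E → Bool} {t : ℕ} :
    tau T f a ≤ t ↔ Determined T f a t :=
  ⟨(hT.determined_tau a).mono, fun h => Nat.sInf_le (s := {t | Determined T f a t}) h⟩

theorem QueriesDistinct.determined_iff_of_agree {a a' : E → Bool} {t : ℕ}
    (h : AgreeOnQueries T a a' (min t (tau T f a))) {s : ℕ} (hst : s ≤ t) :
    Determined T f a' s ↔ Determined T f a s := by
  rcases le_or_gt s (tau T f a) with hs | hs
  · exact h.determined_iff (le_min hst hs)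
  · have hdet := hT.determined_tau (f := f) a
    have hdet' := (h.determined_iff (le_min (hs.le.trans hst) le_rfl)).2 hdet
    exact iff_of_true (hdet'.mono hs.le) (hdet.mono hs.le)

theorem QueriesDistinct.min_tau_eq_of_agree {a a' : E → Bool} {t : ℕ}
    (h : AgreeOnQueries T a a' (min t (tau T f a))) :
    min t (tau T f a') = min t (tau T f a) := by
  have key : ∀ s ≤ t, tau T f a' ≤ s ↔ tau T f a ≤ s := fun s hs => by
    rw [hT.tau_le_iff, hT.tau_le_iff, hT.determined_iff_of_agree h hs]
  by_contra hne
  rcases lt_or_gt_of_ne hne with hlt | hlt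
  · have hle : tau T f a' < t := by omega
    have := (key _ hle.le).1 le_rfl
    omega
  · have hle : tau T f a < t := by omega
    have := (key _ hle.le).2 le_rfl
    omega

theorem QueriesDistinct.lt_tau_iff_of_agree {a a' : E → Bool} {t : ℕ}
    (h : AgreeOnQueries T a a' (min t (tau T f a))) :
    t < tau T f a' ↔ t < tau T f a := by
  simp only [← not_le, hT.tau_le_iff, hT.determined_iff_of_agree h le_rfl]

theorem QueriesDistinct.revealsAt_iff_of_agree {a a' : E → Bool} {t : ℕ} {e : E}
    (h : AgreeOnQueries T a a' (min t (tau T f a))) :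
    RevealsAt T f a' t e ↔ RevealsAt T f a t e := by
  rw [RevealsAt, RevealsAt, hT.lt_tau_iff_of_agree h]
  refine and_congr_right fun ht => ?_
  rw [(h.mono (le_min le_rfl ht.le)).query_eq le_rfl]

end StoppingTime

section OSSS

variable {T : List (E × Bool) → E} {f : (E → Bool) → ℝ} {p : ℝ} {a b : E → Bool} {t : ℕ}
  (hT : QueriesDistinct T)
include hT

theorem QueriesDistinct.revealed_eq_of_eqOn {a' : E → Bool}
    (h : ∀ x ∈ revealed T f a t, a' x = a x) : revealed T f a' t = revealed T f a t := by
  have hag := agreeOnQueries_of_eqOn_revealed h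
  rw [revealed, revealed, hT.min_tau_eq_of_agree hag]
  exact Finset.image_congr fun s hs => hag.query_eq (Finset.mem_range.1 hs).le

theorem QueriesDistinct.query_notMem_revealed (ht : t < tau T f a) :
    query T a t ∉ revealed T f a t := by
  simp only [revealed, Finset.mem_image, Finset.mem_range, not_exists, not_and]
  intro s hs
  exact hT a s t (lt_of_lt_of_le hs (min_le_left _ _)) (ht.trans_le (hT.tau_le_card a))

theorem QueriesDistinct.mix_apply_query (ht : t < tau T f a) :
    mix T f a b t (query T a t) = a (query T a t) :=
  Finset.piecewise_eq_of_notMem _ _ _ (hT.query_notMem_revealed ht)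

theorem QueriesDistinct.mix_piecewise (a b : E → Bool) (t : ℕ) :
    mix T f ((revealed T f a t).piecewise a b) ((revealed T f a t).piecewise b a) t = b := by
  rw [mix, hT.revealed_eq_of_eqOn fun x hx => Finset.piecewise_eq_of_mem _ _ _ hx]
  ext x
  by_cases hx : x ∈ revealed T f a t <;> simp [hx]

theorem QueriesDistinct.revealsAt_update_iff {e : E} (c : Bool) :
    RevealsAt T f (Function.update a e c) t e ↔ RevealsAt T f a t e := by
  suffices key : ∀ a c, RevealsAt T f a t e → RevealsAt T f (Function.update a e c) t e by
    refine ⟨fun h => ?_, key a c⟩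
    simpa using key _ (a e) h
  intro a c ha
  refine (hT.revealsAt_iff_of_agree fun s hs => Function.update_of_ne ?_ _ _).2 ha
  rw [min_eq_left ha.1.le] at hs
  exact ha.2 ▸ hT a s t hs (ha.1.trans_le (hT.tau_le_card a))

theorem QueriesDistinct.abs_sub_mix_succ_le (hf : Monotone f) (a b : E → Bool) (t : ℕ) :
    |f (mix T f a b t) - f (mix T f a b (t + 1))| ≤
      ∑ e, if RevealsAt T f a t e ∧ a e ≠ b e then coordDiff f e (mix T f a b t) else 0 := by
  by_cases ht : t < tau T f a
  · rw [mix_succ_of_lt ht, Finset.sum_eq_single (query T a t)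
      (fun e _ he => if_neg fun h => he h.1.2.symm) (by simp)]
    simpa [RevealsAt, ht, hT.mix_apply_query ht] using
      abs_sub_update_le hf (mix T f a b t) (query T a t) (b (query T a t))
  · rw [mix_succ_of_le (not_lt.1 ht), sub_self, abs_zero]
    exact Finset.sum_nonneg fun e _ => by simp [RevealsAt, ht]

theorem QueriesDistinct.mul_sub_mix_le (hf01 : ∀ ω, f ω ∈ Set.Icc (0 : ℝ) 1) (hf : Monotone f)
    (a b : E → Bool) :
    f a * (f a - f (mix T f a b (Fintype.card E))) ≤
      ∑ t ∈ Finset.range (Fintype.card E),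
        ∑ e, if RevealsAt T f a t e ∧ a e ≠ b e then coordDiff f e (mix T f a b t) else 0 := by
  set x := f a - f (mix T f a b (Fintype.card E))
  calc f a * x ≤ f a * |x| := mul_le_mul_of_nonneg_left (le_abs_self x) (hf01 a).1
    _ ≤ |x| := mul_le_of_le_one_left (abs_nonneg x) (hf01 a).2
    _ = |∑ t ∈ Finset.range (Fintype.card E), (f (mix T f a b t) - f (mix T f a b (t + 1)))| := by
      rw [Finset.sum_range_sub', mix_zero]
    _ ≤ _ := (Finset.abs_sum_le_sum_abs _ _).trans <|
      Finset.sum_le_sum fun t _ => hT.abs_sub_mix_succ_le hf a b t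

theorem QueriesDistinct.ep_ep_mul_mix :
    Ep p (fun a => Ep p fun b => f a * f (mix T f a b (Fintype.card E))) = Ep p f * Ep p f := by
  have hfa : ∀ a b, f ((revealed T f a (Fintype.card E)).piecewise a b) = f a := fun a b =>
    hT.determined_tau a _ fun s hs => Finset.piecewise_eq_of_mem _ _ _ <|
      Finset.mem_image_of_mem _ (Finset.mem_range.2 (by rwa [min_eq_right (hT.tau_le_card a)]))
  calc Ep p (fun a => Ep p fun b => f a * f (mix T f a b (Fintype.card E)))
      = Ep p (fun a => Ep p fun b =>
          f ((revealed T f a (Fintype.card E)).piecewise a b) *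
            f ((revealed T f a (Fintype.card E)).piecewise b a)) := by
        simp only [hfa, mix]
    _ = Ep p (fun a => Ep p fun b => f a * f b) :=
        ep_ep_piecewise_swap (fun _ _ h => hT.revealed_eq_of_eqOn h) fun a b => f a * f b
    _ = Ep p f * Ep p f := by
        rw [← ep_const_mul]
        congr 1
        funext a
        rw [ep_const_mul, mul_comm]

theorem QueriesDistinct.var_eq :
    Var p f = Ep p (fun a => Ep p fun b => f a * (f a - f (mix T f a b (Fintype.card E)))) := by
  simp only [mul_sub, ep_sub, ep_const, hT.ep_ep_mul_mix, Var]

theorem QueriesDistinct.ep_ep_revealsAt_coordDiff (t : ℕ) (e : E) :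
    Ep p (fun a => Ep p fun b =>
        if RevealsAt T f a t e ∧ a e ≠ b e then coordDiff f e (mix T f a b t) else 0) =
      2 * p * (1 - p) * Pp p (fun a => RevealsAt T f a t e) * Ep p (coordDiff f e) := by
  have hswap : ∀ a b, (if RevealsAt T f ((revealed T f a t).piecewise a b) t e ∧
        (revealed T f a t).piecewise a b e ≠ (revealed T f a t).piecewise b a e
      then coordDiff f e (mix T f ((revealed T f a t).piecewise a b)
        ((revealed T f a t).piecewise b a) t) else 0) =
      (if RevealsAt T f a t e then 1 else 0) * (if b e ≠ a e then coordDiff f e b else 0) := by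
    intro a b
    rw [hT.mix_piecewise, hT.revealsAt_iff_of_agree
      (agreeOnQueries_of_eqOn_revealed fun x hx => Finset.piecewise_eq_of_mem _ _ _ hx)]
    by_cases ha : RevealsAt T f a t e
    · have he : e ∉ revealed T f a t := ha.2 ▸ hT.query_notMem_revealed ha.1
      simp [ha, Finset.piecewise_eq_of_notMem _ _ _ he]
    · simp [ha]
  have hinner : ∀ c : Bool, Ep p (fun b => if b e ≠ c then coordDiff f e b else 0) =
      (if c then 1 - p else p) * Ep p (coordDiff f e) := by
    intro c
    rw [ep_eq_cond_coord e]
    cases c <;> simp [coordDiff_update, ep_const]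
  have houter : Ep p (fun a => (if RevealsAt T f a t e then 1 else 0) * (if a e then 1 - p else p))
      = 2 * p * (1 - p) * Pp p (fun a => RevealsAt T f a t e) := by
    rw [ep_eq_cond_coord e, pp_eq_ep]
    simp only [hT.revealsAt_update_iff, Function.update_self, if_true, Bool.false_eq_true,
      if_false, ep_mul_const]
    ring
  rw [← ep_ep_piecewise_swap (S := (revealed T f · t)) fun _ _ h => hT.revealed_eq_of_eqOn h]
  simp only [hswap, ep_const_mul, hinner, ← mul_assoc, ep_mul_const, houter]

theorem QueriesDistinct.revealment_eq_sum (e : E) :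
    revealment p T f e =
      ∑ t ∈ Finset.range (Fintype.card E), Pp p (fun a => RevealsAt T f a t e) := by
  rw [show revealment p T f e = Pp p (fun a => ∃ t, RevealsAt T f a t e) from rfl]
  simp only [Pp]
  rw [Finset.sum_comm]
  refine Finset.sum_congr rfl fun a _ => ?_
  by_cases h : ∃ t, RevealsAt T f a t e
  · obtain ⟨t₀, ht₀⟩ := h
    have htn : t₀ < Fintype.card E := ht₀.1.trans_le (hT.tau_le_card a)
    rw [if_pos ⟨t₀, ht₀⟩, Finset.sum_eq_single_of_mem t₀ (Finset.mem_range.2 htn), if_pos ht₀]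
    exact fun t ht hne => if_neg fun h =>
      hne (hT.query_inj (Finset.mem_range.1 ht) htn (h.2.trans ht₀.2.symm))
  · rw [if_neg h]
    exact (Finset.sum_eq_zero fun t _ => if_neg fun ht => h ⟨t, ht⟩).symm

end OSSS

/-- The OSSS inequality for Bernoulli percolation:
`Var_p(f) ≤ 2 ∑_e δ_e(f,T) Cov_p(f, ω_e)` for every increasing `f : {0,1}^E → [0,1]`
and every decision tree `T` (whose queries are all distinct). -/
theorem osss_bernoulli (p : ℝ) (hp : p ∈ Set.Icc (0 : ℝ) 1)
    (f : (E → Bool) → ℝ) (hf01 : ∀ ω, f ω ∈ Set.Icc (0 : ℝ) 1)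
    (hfinc : ∀ ω ω' : E → Bool, (∀ e : E, ω e ≤ ω' e) → f ω ≤ f ω')
    (T : List (E × Bool) → E)
    (hT : ∀ ω : E → Bool, ∀ s t : ℕ, s < t → t < Fintype.card E →
      query T ω s ≠ query T ω t) :
    Var p f ≤ 2 * ∑ e : E,
      revealment p T f e * Cov p f (fun ω => if ω e then 1 else 0) := by
  have hT : QueriesDistinct T := hT
  calc Var p f = Ep p (fun a => Ep p fun b => f a * (f a - f (mix T f a b (Fintype.card E)))) :=
        hT.var_eq
    _ ≤ Ep p (fun a => Ep p fun b => ∑ t ∈ Finset.range (Fintype.card E), ∑ e,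
          if RevealsAt T f a t e ∧ a e ≠ b e then coordDiff f e (mix T f a b t) else 0) :=
        ep_mono hp fun a => ep_mono hp fun b => hT.mul_sub_mix_le hf01 hfinc a b
    _ = ∑ t ∈ Finset.range (Fintype.card E), ∑ e,
          2 * p * (1 - p) * Pp p (fun a => RevealsAt T f a t e) * Ep p (coordDiff f e) := by
        simp only [ep_sum, hT.ep_ep_revealsAt_coordDiff]
    _ = 2 * ∑ e, revealment p T f e * Cov p f (fun ω => if ω e then 1 else 0) := by
        rw [Finset.sum_comm, Finset.mul_sum]
        refine Finset.sum_congr rfl fun e _ => ?_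
        rw [hT.revealment_eq_sum, cov_coord_eq, Finset.sum_mul, Finset.mul_sum]
        exact Finset.sum_congr rfl fun t _ => by ring

end Stmt16
end

section
/- Covariance lower bound from exploration algorithms. Fix d ≥ 1, p ∈ (0,1) and n ≥ 1, and set θ_k(p) = ℙ_p[0 ↔ ∂Λ_k] and S_n = ∑_{k=0}^{n−1} θ_k(p). Then ∑_{e ∈ E_n} Cov_p( 1_{0 ↔ ∂Λ_n}, ω_e ) ≥ (n / (8 S_n)) · θ_n(p) · (1 − θ_n(p)), where Cov_p denotes covariance under Bernoulli percolation ℙ_p and ω_e the coordinate map. -/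
/-!
For each `k < n`, explore the open cluster of `∂Λ_k` edge by edge. Every open path from `0` to
`∂Λ_n` crosses `∂Λ_k`, so the exploration determines the increasing event `{0 ↔ ∂Λ_n}`, and the
OSSS inequality bounds `θ_n (1 - θ_n)` by `∑_e δ_e(k) Cov(1_{0 ↔ ∂Λ_n}, ω_e)`, where `δ_e(k)` is
the probability that the exploration reveals `e`. An edge is revealed only if one of its endpoints
`x` is connected to `∂Λ_k`; such a connection contains a translate of an arm from the origin to
distance `j` for every `j ≤ |k - ‖x‖_∞|`, so it has probability at most `θ_j`, and summing over
`k < n` gives `∑_k δ_e(k) ≤ 4 S_n`. Averaging the `n` inequalities over `k` proves the bound.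

OSSS itself follows from a hybrid argument: resampling the coordinates revealed along the run of
the tree moves `f` by at most the sum of the revealment-weighted resampling influences, while it
produces a configuration independent of the original as far as `f` is concerned.
-/

open scoped BigOperators Classical

namespace Stmt17

/-- The `i`-th unit vector of `ℤ^d`. -/
def unit (d : ℕ) (i : Fin d) : Fin d → ℤ := fun j => if j = i then 1 else 0

/-- The box `Λ_n = [-n,n]^d ∩ ℤ^d`. -/
noncomputable def box (d n : ℕ) : Finset (Fin d → ℤ) :=
  Fintype.piFinset fun _ : Fin d => Finset.Icc (-(n : ℤ)) (n : ℤ)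

/-- The edge set `E_n` of the box: an edge is encoded by a pair `(x, i)`, joining
`x` and `x + unit i`; both endpoints must lie in the box. -/
noncomputable def boxEdges (d n : ℕ) : Finset ((Fin d → ℤ) × Fin d) :=
  ((box d n) ×ˢ (Finset.univ : Finset (Fin d))).filter fun e => e.1 + unit d e.2 ∈ box d n

/-- Extend a configuration on the box edges by closed edges. -/
noncomputable def ext (d n : ℕ) (σ : {e // e ∈ boxEdges d n} → Bool) :
    ((Fin d → ℤ) × Fin d) → Bool :=
  fun e => if h : e ∈ boxEdges d n then σ ⟨e, h⟩ else false

/-- Adjacency by an open edge. -/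
def adj (d : ℕ) (ω : ((Fin d → ℤ) × Fin d) → Bool) (x y : Fin d → ℤ) : Prop :=
  ∃ i : Fin d, (ω (x, i) = true ∧ y = x + unit d i) ∨ (ω (y, i) = true ∧ x = y + unit d i)

/-- Connectivity by open paths. -/
def conn (d : ℕ) (ω : ((Fin d → ℤ) × Fin d) → Bool) : (Fin d → ℤ) → (Fin d → ℤ) → Prop :=
  Relation.ReflTransGen (adj d ω)

/-- The inner vertex boundary `∂Λ_k`. -/
noncomputable def bdryBox (d k : ℕ) : Finset (Fin d → ℤ) :=
  (box d k).filter fun x => ∃ i : Fin d, x + unit d i ∉ box d k ∨ x - unit d i ∉ box d k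

/-- Bernoulli weight `p^{o(σ)} (1-p)^{c(σ)}` of a configuration on the edges `E_n`. -/
noncomputable def bw (d n : ℕ) (p : ℝ) (σ : {e // e ∈ boxEdges d n} → Bool) : ℝ :=
  p ^ (Finset.univ.filter fun e : {e // e ∈ boxEdges d n} => σ e = true).card *
    (1 - p) ^ (Finset.univ.filter fun e : {e // e ∈ boxEdges d n} => σ e = false).card

/-- Expectation under the Bernoulli(p) measure on configurations of `E_n`. -/
noncomputable def Ep (d n : ℕ) (p : ℝ) (g : ({e // e ∈ boxEdges d n} → Bool) → ℝ) : ℝ :=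
  ∑ σ : {e // e ∈ boxEdges d n} → Bool, g σ * bw d n p σ

/-- Covariance under the Bernoulli(p) measure on configurations of `E_n`. -/
noncomputable def Cov (d n : ℕ) (p : ℝ)
    (g h : ({e // e ∈ boxEdges d n} → Bool) → ℝ) : ℝ :=
  Ep d n p (fun σ => g σ * h σ) - Ep d n p g * Ep d n p h

/-- The indicator of the one-arm event `{0 ↔ ∂Λ_k}`. -/
noncomputable def oneArmInd (d n k : ℕ) (σ : {e // e ∈ boxEdges d n} → Bool) : ℝ :=
  if ∃ y ∈ bdryBox d k, conn d (ext d n σ) 0 y then 1 else 0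

/-- `θ_k(p) = ℙ_p[0 ↔ ∂Λ_k]`. -/
noncomputable def theta (d n k : ℕ) (p : ℝ) : ℝ := Ep d n p (oneArmInd d n k)

open Finset hiding box
open Function Relation

section Expectation

variable {ι : Type*} [Fintype ι]

def coin (p : ℝ) (b : Bool) : ℝ := if b then p else 1 - p

def weight (p : ℝ) (χ : ι → Bool) : ℝ := ∏ i, coin p (χ i)

@[simp] lemma coin_true (p : ℝ) : coin p true = p := rfl

@[simp] lemma coin_false (p : ℝ) : coin p false = 1 - p := rfl

lemma sum_coin (p : ℝ) : ∑ b, coin p b = 1 := by simp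

variable {p : ℝ}

lemma coin_nonneg (hp0 : 0 ≤ p) (hp1 : p ≤ 1) (b : Bool) : 0 ≤ coin p b := by
  cases b <;> simpa

lemma weight_nonneg (hp0 : 0 ≤ p) (hp1 : p ≤ 1) (χ : ι → Bool) : 0 ≤ weight p χ :=
  prod_nonneg fun i _ => coin_nonneg hp0 hp1 (χ i)

variable [DecidableEq ι]

def expectation (p : ℝ) (g : (ι → Bool) → ℝ) : ℝ := ∑ χ, g χ * weight p χ

def expectation₂ (p : ℝ) (G : (ι → Bool) → (ι → Bool) → ℝ) : ℝ :=
  expectation p fun χ => expectation p (G χ)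

def cov (p : ℝ) (f g : (ι → Bool) → ℝ) : ℝ :=
  expectation p (fun χ => f χ * g χ) - expectation p f * expectation p g

lemma sum_weight (p : ℝ) : ∑ χ : ι → Bool, weight p χ = 1 := by
  simp only [weight, ← Fintype.prod_sum, sum_coin, prod_const_one]

lemma expectation_const (p c : ℝ) : expectation p (fun _ : ι → Bool => c) = c := by
  rw [expectation, ← mul_sum, sum_weight, mul_one]

lemma expectation_add (p : ℝ) (f g : (ι → Bool) → ℝ) :
    expectation p (fun χ => f χ + g χ) = expectation p f + expectation p g := by
  simp only [expectation, add_mul, sum_add_distrib]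

lemma expectation_sub (p : ℝ) (f g : (ι → Bool) → ℝ) :
    expectation p (fun χ => f χ - g χ) = expectation p f - expectation p g := by
  simp only [expectation, sub_mul, sum_sub_distrib]

lemma expectation_const_mul (p c : ℝ) (f : (ι → Bool) → ℝ) :
    expectation p (fun χ => c * f χ) = c * expectation p f := by
  simp only [expectation, mul_sum, mul_assoc]

lemma expectation_mul_const (p c : ℝ) (f : (ι → Bool) → ℝ) :
    expectation p (fun χ => f χ * c) = expectation p f * c := by
  simp only [expectation, sum_mul, mul_right_comm _ c]

lemma expectation_sum {β : Type*} (p : ℝ) (s : Finset β) (f : β → (ι → Bool) → ℝ) :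
    expectation p (fun χ => ∑ b ∈ s, f b χ) = ∑ b ∈ s, expectation p (f b) := by
  simp only [expectation, sum_mul]
  exact sum_comm

lemma expectation_mono (hp0 : 0 ≤ p) (hp1 : p ≤ 1) {f g : (ι → Bool) → ℝ}
    (h : ∀ χ, f χ ≤ g χ) : expectation p f ≤ expectation p g :=
  sum_le_sum fun χ _ => mul_le_mul_of_nonneg_right (h χ) (weight_nonneg hp0 hp1 χ)

lemma expectation_nonneg (hp0 : 0 ≤ p) (hp1 : p ≤ 1) {f : (ι → Bool) → ℝ}
    (h : ∀ χ, 0 ≤ f χ) : 0 ≤ expectation p f :=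
  expectation_const (ι := ι) p 0 ▸ expectation_mono hp0 hp1 h

lemma expectation_comp_perm (p : ℝ) (π : Equiv.Perm ι) (f : (ι → Bool) → ℝ) :
    expectation p (fun χ => f (χ ∘ π)) = expectation p f := by
  have hweight : ∀ χ : ι → Bool, weight p (χ ∘ π) = weight p χ := fun χ =>
    Equiv.prod_comp π fun i => coin p (χ i)
  simp only [expectation]
  rw [← (π.symm.arrowCongr (Equiv.refl Bool)).sum_comp fun χ => f χ * weight p χ]
  exact sum_congr rfl fun χ _ => by rw [← hweight χ]; rfl

lemma weight_update_mul_coin (p : ℝ) (χ : ι → Bool) (i : ι) (b : Bool) :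
    weight p (update χ i b) * coin p (χ i) = coin p b * weight p χ := by
  have hupdate :
      weight p (update χ i b) = ∏ j, update (fun j => coin p (χ j)) i (coin p b) j := by
    simp only [weight, apply_update fun _ => coin p]
  rw [hupdate, prod_update_of_mem (mem_univ i), weight, ← mul_prod_erase univ _ (mem_univ i),
    sdiff_singleton_eq_erase]
  ring

def updateEquiv (i : ι) : Bool × (ι → Bool) ≃ (ι → Bool) × Bool where
  toFun bχ := (update bχ.2 i bχ.1, bχ.2 i)
  invFun χc := (χc.1 i, update χc.1 i χc.2)
  left_inv := fun ⟨b, χ⟩ => by simp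
  right_inv := fun ⟨χ, c⟩ => by simp

lemma expectation_eq_sum_update (p : ℝ) (i : ι) (f : (ι → Bool) → ℝ) :
    expectation p f = ∑ b, coin p b * expectation p (fun χ => f (update χ i b)) := by
  have hreindex :
      ∑ bχ : Bool × (ι → Bool), coin p bχ.1 * (f (update bχ.2 i bχ.1) * weight p bχ.2)
      = ∑ χc : (ι → Bool) × Bool, f χc.1 * weight p χc.1 * coin p χc.2 := by
    rw [← (updateEquiv i).sum_comp]
    refine sum_congr rfl fun ⟨b, χ⟩ _ => ?_
    simp only [updateEquiv, Equiv.coe_fn_mk, mul_assoc, weight_update_mul_coin]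
    ring
  simp only [expectation, mul_sum]
  rw [← Fintype.sum_prod_type', hreindex, Fintype.sum_prod_type]
  simp [← mul_sum]

lemma expectation₂_add (p : ℝ) (F G : (ι → Bool) → (ι → Bool) → ℝ) :
    expectation₂ p (fun χ ξ => F χ ξ + G χ ξ) = expectation₂ p F + expectation₂ p G := by
  simp only [expectation₂, expectation_add]

lemma expectation₂_mono (hp0 : 0 ≤ p) (hp1 : p ≤ 1)
    {F G : (ι → Bool) → (ι → Bool) → ℝ} (h : ∀ χ ξ, F χ ξ ≤ G χ ξ) :
    expectation₂ p F ≤ expectation₂ p G :=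
  expectation_mono hp0 hp1 fun χ => expectation_mono hp0 hp1 (h χ)

lemma expectation₂_nonneg (hp0 : 0 ≤ p) (hp1 : p ≤ 1)
    {F : (ι → Bool) → (ι → Bool) → ℝ} (h : ∀ χ ξ, 0 ≤ F χ ξ) : 0 ≤ expectation₂ p F :=
  expectation_nonneg hp0 hp1 fun χ => expectation_nonneg hp0 hp1 (h χ)

lemma expectation₂_of_left (p : ℝ) (f : (ι → Bool) → ℝ) :
    expectation₂ p (fun χ _ => f χ) = expectation p f := by
  simp only [expectation₂, expectation_const]

lemma expectation₂_eq_sum_update (p : ℝ) (i : ι)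
    (F : (ι → Bool) → (ι → Bool) → ℝ) :
    expectation₂ p F = ∑ b, ∑ c, coin p b * coin p c *
      expectation₂ p (fun χ ξ => F (update χ i b) (update ξ i c)) := by
  simp only [expectation₂]
  rw [expectation_eq_sum_update p i]
  refine sum_congr rfl fun b _ => ?_
  simp only [expectation_eq_sum_update p i (F (update _ i b)), expectation_sum,
    expectation_const_mul, mul_sum, mul_assoc]

end Expectation

inductive DecisionTree (ι : Type*)
  | leaf : DecisionTree ι
  | node (i : ι) (next : Bool → DecisionTree ι) : DecisionTree ι

namespace DecisionTree

variable {ι : Type*} [DecidableEq ι]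

def revealed : DecisionTree ι → (ι → Bool) → Finset ι
  | leaf, _ => ∅
  | node i next, χ => insert i ((next (χ i)).revealed χ)

def Nodup : DecisionTree ι → Prop
  | leaf => True
  | node i next => ∀ b, (∀ χ, i ∉ (next b).revealed χ) ∧ (next b).Nodup

def Determines {α : Type*} (T : DecisionTree ι) (f : (ι → Bool) → α) : Prop :=
  ∀ χ χ', (∀ j ∈ T.revealed χ, χ' j = χ j) → f χ' = f χ

def hybrid (T : DecisionTree ι) (χ ξ : ι → Bool) : ι → Bool :=
  fun j => if j ∈ T.revealed χ then ξ j else χ j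

@[simp] lemma revealed_leaf (χ : ι → Bool) : (leaf : DecisionTree ι).revealed χ = ∅ := rfl

lemma revealed_node (i : ι) (next : Bool → DecisionTree ι) (χ : ι → Bool) :
    (node i next).revealed χ = insert i ((next (χ i)).revealed χ) := rfl

lemma determines_revealed (T : DecisionTree ι) : T.Determines T.revealed := by
  induction T with
  | leaf => exact fun _ _ _ => rfl
  | node i next ih =>
    intro χ χ' h
    have hi : χ' i = χ i := h i (mem_insert_self _ _)
    rw [revealed_node, revealed_node, hi,
      ih (χ i) χ χ' fun j hj => h j (mem_insert_of_mem hj)]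

lemma revealed_update_of_forall_notMem {T : DecisionTree ι} {i : ι}
    (hi : ∀ χ, i ∉ T.revealed χ) (χ : ι → Bool) (b : Bool) :
    T.revealed (update χ i b) = T.revealed χ :=
  T.determines_revealed χ _ fun _ hj => update_of_ne (ne_of_mem_of_not_mem hj (hi χ)) _ _

variable {i : ι} {next : Bool → DecisionTree ι}

lemma revealed_node_update (hT : (node i next).Nodup) (χ : ι → Bool) (b : Bool) :
    (node i next).revealed (update χ i b) = insert i ((next b).revealed χ) := by
  rw [revealed_node, update_self, revealed_update_of_forall_notMem (hT b).1]

lemma hybrid_leaf (χ ξ : ι → Bool) : hybrid leaf χ ξ = χ := rfl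

lemma hybrid_node_update (hT : (node i next).Nodup) (χ ξ : ι → Bool) (b c : Bool) :
    hybrid (node i next) (update χ i b) (update ξ i c) = update (hybrid (next b) χ ξ) i c := by
  funext j
  rcases eq_or_ne j i with rfl | hj
  · simp [hybrid, revealed_node_update hT]
  · simp [hybrid, revealed_node_update hT, hj]

lemma Determines.node_update {α : Type*} {f : (ι → Bool) → α} (hT : (node i next).Nodup)
    (hf : (node i next).Determines f) (b : Bool) :
    (next b).Determines fun χ => f (update χ i b) := by
  intro χ χ' h
  refine hf _ _ fun j hj => ?_
  rw [revealed_node_update hT, mem_insert] at hj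
  rcases hj with rfl | hj
  · simp
  · rw [update_of_ne (ne_of_mem_of_not_mem hj ((hT b).1 χ)), update_of_ne, h j hj]
    exact ne_of_mem_of_not_mem hj ((hT b).1 χ)

end DecisionTree

section OSSS

open DecisionTree

variable {ι : Type*} [Fintype ι] [DecidableEq ι] {p : ℝ}

def revealment (p : ℝ) (T : DecisionTree ι) (i : ι) : ℝ :=
  expectation p fun χ => if i ∈ T.revealed χ then 1 else 0

def resampleInfluence (p : ℝ) (f : (ι → Bool) → ℝ) (i : ι) : ℝ :=
  expectation₂ p fun χ ξ => |f χ - f (update χ i (ξ i))|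

lemma revealment_nonneg (hp0 : 0 ≤ p) (hp1 : p ≤ 1) (T : DecisionTree ι) (i : ι) :
    0 ≤ revealment p T i :=
  expectation_nonneg hp0 hp1 fun _ => by positivity

lemma resampleInfluence_nonneg (hp0 : 0 ≤ p) (hp1 : p ≤ 1) (f : (ι → Bool) → ℝ) (i : ι) :
    0 ≤ resampleInfluence p f i :=
  expectation₂_nonneg hp0 hp1 fun _ _ => abs_nonneg _

lemma revealment_node_self (p : ℝ) (i : ι) (next : Bool → DecisionTree ι) :
    revealment p (node i next) i = 1 := by
  simp [revealment, revealed_node, expectation_const]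

lemma revealment_eq_zero {T : DecisionTree ι} {i : ι} (hi : ∀ χ, i ∉ T.revealed χ) :
    revealment p T i = 0 := by
  simp [revealment, hi, expectation_const]

lemma revealment_node_of_ne {i j : ι} {next : Bool → DecisionTree ι} (hT : (node i next).Nodup)
    (hj : j ≠ i) : revealment p (node i next) j = ∑ b, coin p b * revealment p (next b) j := by
  rw [revealment, expectation_eq_sum_update p i]
  simp only [revealed_node_update hT, mem_insert, hj, false_or, revealment]

lemma resampleInfluence_eq_sum_update {i j : ι} (hj : j ≠ i) (f : (ι → Bool) → ℝ) :
    resampleInfluence p f j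
      = ∑ c, coin p c * resampleInfluence p (fun χ => f (update χ i c)) j := by
  rw [resampleInfluence, expectation₂, expectation_eq_sum_update p i]
  simp only [resampleInfluence, expectation₂, update_comm hj.symm]

/-- Replacing the coordinates of `χ` revealed by `T` with those of an independent `ξ` yields a
configuration independent of everything `T` reads off `χ`. -/
lemma expectation₂_hybrid (p : ℝ) {T : DecisionTree ι} (hT : T.Nodup)
    {F : (ι → Bool) → (ι → Bool) → ℝ} (hF : T.Determines F) :
    expectation₂ p (fun χ ξ => F χ (hybrid T χ ξ)) = expectation₂ p F := by
  induction T generalizing F with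
  | leaf =>
    have hconst : ∀ χ ξ, F χ = F ξ := fun χ ξ => hF ξ χ (by simp)
    simp only [hybrid_leaf]
    rw [expectation₂_of_left p fun χ => F χ χ]
    simp only [expectation₂, hconst _ (fun _ => false), expectation_const]
  | node i next ih =>
    rw [expectation₂_eq_sum_update p i, expectation₂_eq_sum_update p i F]
    refine sum_congr rfl fun b _ => sum_congr rfl fun c _ => ?_
    simp only [hybrid_node_update hT]
    congr 1
    refine ih b (hT b).2 (F := fun χ ξ => F (update χ i b) (update ξ i c)) ?_
    intro χ χ' h
    funext ξ
    exact congrFun (hF.node_update hT b χ χ' h) _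

lemma revealment_mul_resampleInfluence_node {i : ι} {next : Bool → DecisionTree ι}
    (hT : (node i next).Nodup) (f : (ι → Bool) → ℝ) (j : ι) :
    revealment p (node i next) j * resampleInfluence p f j
      = ∑ b, ∑ c, coin p b * coin p c *
          (revealment p (next b) j * resampleInfluence p (fun χ => f (update χ i c)) j)
        + if j = i then resampleInfluence p f i else 0 := by
  rcases eq_or_ne j i with rfl | hj
  · simp [revealment_node_self, revealment_eq_zero fun χ => (hT _).1 χ]
  · rw [revealment_node_of_ne hT hj, resampleInfluence_eq_sum_update hj, sum_mul_sum, if_neg hj,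
      add_zero]
    exact sum_congr rfl fun b _ => sum_congr rfl fun c _ => by ring

lemma expectation₂_abs_sub_hybrid_le (hp0 : 0 ≤ p) (hp1 : p ≤ 1) {T : DecisionTree ι}
    (hT : T.Nodup) (f : (ι → Bool) → ℝ) :
    expectation₂ p (fun χ ξ => |f χ - f (hybrid T χ ξ)|)
      ≤ ∑ i, revealment p T i * resampleInfluence p f i := by
  induction T generalizing f with
  | leaf =>
    simp only [hybrid_leaf, sub_self, abs_zero]
    rw [expectation₂_of_left p fun _ => 0, expectation_const]
    exact sum_nonneg fun i _ =>
      mul_nonneg (revealment_nonneg hp0 hp1 _ i) (resampleInfluence_nonneg hp0 hp1 f i)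
  | node i next ih =>
    have hrest :
        expectation₂ p (fun χ ξ => |f (update χ i (ξ i)) - f (hybrid (node i next) χ ξ)|)
        ≤ ∑ j, ∑ b, ∑ c, coin p b * coin p c *
          (revealment p (next b) j * resampleInfluence p (fun χ => f (update χ i c)) j) := by
      calc _ = ∑ b, ∑ c, coin p b * coin p c * expectation₂ p (fun χ ξ =>
                |f (update χ i c) - f (update (hybrid (next b) χ ξ) i c)|) := by
            rw [expectation₂_eq_sum_update p i]
            simp only [hybrid_node_update hT, update_self, update_idem]
        _ ≤ ∑ b, ∑ c, coin p b * coin p c * ∑ j,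
              revealment p (next b) j * resampleInfluence p (fun χ => f (update χ i c)) j :=
            sum_le_sum fun b _ => sum_le_sum fun c _ => mul_le_mul_of_nonneg_left
              (ih b (hT b).2 _) (mul_nonneg (coin_nonneg hp0 hp1 b) (coin_nonneg hp0 hp1 c))
        _ = _ := by
            simp only [mul_sum]
            exact (sum_comm.trans (sum_congr rfl fun _ _ => sum_comm)).symm
    calc expectation₂ p (fun χ ξ => |f χ - f (hybrid (node i next) χ ξ)|)
        ≤ resampleInfluence p f i + expectation₂ p (fun χ ξ =>
            |f (update χ i (ξ i)) - f (hybrid (node i next) χ ξ)|) := by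
          rw [resampleInfluence, ← expectation₂_add]
          exact expectation₂_mono hp0 hp1 fun χ ξ => abs_sub_le _ _ _
      _ ≤ _ := by
          simp only [revealment_mul_resampleInfluence_node hT, sum_add_distrib, sum_ite_eq',
            mem_univ, if_true]
          linarith

lemma expectation₂_abs_sub_of_boolean (p : ℝ) {f : (ι → Bool) → ℝ}
    (hf : ∀ χ, f χ = 0 ∨ f χ = 1) :
    expectation₂ p (fun χ ξ => |f χ - f ξ|)
      = 2 * (expectation p f * (1 - expectation p f)) := by
  have hpoint : ∀ χ ξ, |f χ - f ξ| = f χ + f ξ - 2 * f χ * f ξ := by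
    intro χ ξ
    rcases hf χ with h | h <;> rcases hf ξ with h' | h' <;> norm_num [h, h']
  simp only [hpoint, expectation₂, expectation_sub, expectation_add, expectation_const,
    expectation_const_mul, expectation_mul_const]
  ring

/-- The O'Donnell–Saks–Schramm–Servedio inequality. -/
theorem two_mul_variance_le_sum_revealment_mul_resampleInfluence (hp0 : 0 ≤ p) (hp1 : p ≤ 1)
    {T : DecisionTree ι} (hT : T.Nodup) {f : (ι → Bool) → ℝ}
    (hf : ∀ χ, f χ = 0 ∨ f χ = 1)
    (hfT : T.Determines f) :
    2 * (expectation p f * (1 - expectation p f))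
      ≤ ∑ i, revealment p T i * resampleInfluence p f i := by
  rw [← expectation₂_abs_sub_of_boolean p hf,
    ← expectation₂_hybrid p hT (F := fun χ ξ => |f χ - f ξ|)
      fun χ χ' h => congrArg (fun a ξ => |a - f ξ|) (hfT χ χ' h)]
  exact expectation₂_abs_sub_hybrid_le hp0 hp1 hT f

lemma cov_coord_eq (p : ℝ) (i : ι) (f : (ι → Bool) → ℝ) :
    cov p f (fun χ => if χ i then 1 else 0) = p * (1 - p) *
      (expectation p (fun χ => f (update χ i true))
        - expectation p (fun χ => f (update χ i false))) := by
  simp only [cov, expectation_eq_sum_update p i f,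
    expectation_eq_sum_update p i (fun χ => f χ * _),
    expectation_eq_sum_update p i (fun χ => if χ i then (1 : ℝ) else 0), Fintype.sum_bool,
    update_self, coin_true, coin_false]
  simp [expectation_const]
  ring

lemma resampleInfluence_eq_two_mul_cov (p : ℝ) {f : (ι → Bool) → ℝ} {i : ι}
    (hf : ∀ χ, f (update χ i false) ≤ f (update χ i true)) :
    resampleInfluence p f i = 2 * cov p f (fun χ => if χ i then 1 else 0) := by
  have habs : ∀ b c χ, |f (update χ i b) - f (update χ i c)|
      = if b = c then 0 else f (update χ i true) - f (update χ i false) := by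
    intro b c χ
    cases b <;> cases c <;> simp [abs_of_nonneg, abs_of_nonpos, hf χ]
  rw [resampleInfluence, expectation₂_eq_sum_update p i, cov_coord_eq]
  simp only [update_self, update_idem, habs, expectation₂_of_left, Fintype.sum_bool, if_true,
    expectation_const]
  simp [expectation_sub]
  ring

lemma cov_coord_nonneg (hp0 : 0 ≤ p) (hp1 : p ≤ 1) {f : (ι → Bool) → ℝ} {i : ι}
    (hf : ∀ χ, f (update χ i false) ≤ f (update χ i true)) :
    0 ≤ cov p f (fun χ => if χ i then 1 else 0) := by
  rw [cov_coord_eq]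
  exact mul_nonneg (mul_nonneg hp0 (sub_nonneg.2 hp1))
    (sub_nonneg.2 (expectation_mono hp0 hp1 hf))

theorem variance_le_sum_revealment_mul_cov (hp0 : 0 ≤ p) (hp1 : p ≤ 1)
    {T : DecisionTree ι} (hT : T.Nodup) {f : (ι → Bool) → ℝ}
    (hf : ∀ χ, f χ = 0 ∨ f χ = 1)
    (hfT : T.Determines f) (hmono : ∀ i χ, f (update χ i false) ≤ f (update χ i true)) :
    expectation p f * (1 - expectation p f)
      ≤ ∑ i, revealment p T i * cov p f (fun χ => if χ i then 1 else 0) := by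
  have h := two_mul_variance_le_sum_revealment_mul_resampleInfluence hp0 hp1 hT hf hfT
  simp only [resampleInfluence_eq_two_mul_cov p (hmono _), mul_left_comm _ (2 : ℝ), ← mul_sum]
    at h
  linarith

end OSSS

lemma reflTransGen_exists_first_hit {α : Type*} {r : α → α → Prop} {ψ : α → ℕ}
    (hψ : ∀ v w, r v w → ψ w ≤ ψ v + 1) {a b : α} (h : ReflTransGen r a b) {J : ℕ}
    (ha : ψ a ≤ J) (hb : J ≤ ψ b) :
    ∃ v, ψ v = J ∧ ReflTransGen (fun x y => r x y ∧ ψ x ≤ J ∧ ψ y ≤ J) a v := by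
  suffices (∃ v, ψ v = J ∧ ReflTransGen (fun x y => r x y ∧ ψ x ≤ J ∧ ψ y ≤ J) a v) ∨
      ψ b < J ∧ ReflTransGen (fun x y => r x y ∧ ψ x ≤ J ∧ ψ y ≤ J) a b by
    exact this.resolve_right fun h' => by omega
  clear hb
  induction h with
  | refl => exact (eq_or_lt_of_le ha).imp (fun h => ⟨a, h, .refl⟩) fun h => ⟨h, .refl⟩
  | @tail c b _ hcb ih =>
    rcases ih with hit | ⟨hc, hac⟩
    · exact .inl hit
    · have hb := hψ c b hcb
      exact (eq_or_lt_of_le (show ψ b ≤ J by omega)).imp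
        (fun h => ⟨b, h, hac.tail ⟨hcb, hc.le, h.le⟩⟩)
        fun h => ⟨h, hac.tail ⟨hcb, hc.le, h.le⟩⟩

section Lattice

variable {d : ℕ}

def supNorm (x : Fin d → ℤ) : ℕ := univ.sup fun i => (x i).natAbs

lemma supNorm_le_iff {x : Fin d → ℤ} {m : ℕ} :
    supNorm x ≤ m ↔ ∀ i, (x i).natAbs ≤ m := by
  simp [supNorm]

lemma natAbs_le_supNorm (x : Fin d → ℤ) (i : Fin d) : (x i).natAbs ≤ supNorm x :=
  supNorm_le_iff.1 le_rfl i

@[simp] lemma supNorm_zero : supNorm (0 : Fin d → ℤ) = 0 := by simp [supNorm]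

@[simp] lemma supNorm_neg (x : Fin d → ℤ) : supNorm (-x) = supNorm x := by simp [supNorm]

lemma supNorm_sub_comm (x y : Fin d → ℤ) : supNorm (x - y) = supNorm (y - x) := by
  rw [← neg_sub, supNorm_neg]

lemma supNorm_add_le (x y : Fin d → ℤ) : supNorm (x + y) ≤ supNorm x + supNorm y :=
  supNorm_le_iff.2 fun i => (Int.natAbs_add_le _ _).trans
    (add_le_add (natAbs_le_supNorm x i) (natAbs_le_supNorm y i))

lemma supNorm_unit_le (i : Fin d) : supNorm (unit d i) ≤ 1 :=
  supNorm_le_iff.2 fun j => by unfold unit; split <;> simp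

lemma mem_box_iff {m : ℕ} {x : Fin d → ℤ} : x ∈ box d m ↔ supNorm x ≤ m := by
  rw [box, Fintype.mem_piFinset, supNorm_le_iff]
  exact forall_congr' fun i => by rw [mem_Icc]; omega

lemma mem_boxEdges_iff {m : ℕ} {x : Fin d → ℤ} {i : Fin d} :
    (x, i) ∈ boxEdges d m ↔ x ∈ box d m ∧ x + unit d i ∈ box d m := by
  simp [boxEdges]

lemma boxEdges_mono {m m' : ℕ} (h : m ≤ m') : boxEdges d m ⊆ boxEdges d m' := by
  rintro ⟨x, i⟩
  simp only [mem_boxEdges_iff, mem_box_iff]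
  omega

lemma mem_bdryBox_iff (hd : 1 ≤ d) {m : ℕ} {x : Fin d → ℤ} :
    x ∈ bdryBox d m ↔ supNorm x = m := by
  simp only [bdryBox, mem_filter, mem_box_iff]
  constructor
  · rintro ⟨hx, i, hi⟩
    have hplus := supNorm_add_le x (unit d i)
    have hminus := supNorm_add_le x (-unit d i)
    rw [supNorm_neg, ← sub_eq_add_neg] at hminus
    have hunit := supNorm_unit_le i
    omega
  · intro hx
    have : Nonempty (Fin d) := ⟨⟨0, hd⟩⟩
    obtain ⟨i, -, hi⟩ := exists_mem_eq_sup univ univ_nonempty fun i => (x i).natAbs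
    refine ⟨hx.le, i, ?_⟩
    have hxi : (x i).natAbs = m := hi ▸ hx
    by_contra! h
    have hplus := natAbs_le_supNorm (x + unit d i) i
    have hminus := natAbs_le_supNorm (x - unit d i) i
    simp only [Pi.add_apply, Pi.sub_apply, unit, if_true] at hplus hminus
    omega

lemma adj_symm {ω : (Fin d → ℤ) × Fin d → Bool} {v w : Fin d → ℤ} (h : adj d ω v w) :
    adj d ω w v :=
  let ⟨i, h⟩ := h; ⟨i, h.symm⟩

lemma conn_symm {ω : (Fin d → ℤ) × Fin d → Bool} {v w : Fin d → ℤ} (h : conn d ω v w) :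
    conn d ω w v :=
  ReflTransGen.mono (fun _ _ => adj_symm) _ _ (ReflTransGen.swap _ _ h)

lemma supNorm_sub_le_of_adj {ω : (Fin d → ℤ) × Fin d → Bool} {v w : Fin d → ℤ}
    (h : adj d ω v w) (z : Fin d → ℤ) : supNorm (w - z) ≤ supNorm (v - z) + 1 := by
  obtain ⟨i, ⟨-, rfl⟩ | ⟨-, rfl⟩⟩ := h
  · rw [add_sub_right_comm]
    exact (supNorm_add_le _ _).trans (Nat.add_le_add_left (supNorm_unit_le i) _)
  · calc supNorm (w - z) = supNorm (w + unit d i - z + -unit d i) := by congr 1; abel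
      _ ≤ supNorm (w + unit d i - z) + 1 :=
        (supNorm_add_le _ _).trans
          (Nat.add_le_add_left ((supNorm_neg _).trans_le (supNorm_unit_le i)) _)

end Lattice

section Exploration

variable {d n : ℕ}

abbrev Edge (d n : ℕ) := {e // e ∈ boxEdges d n}

def Edge.src (g : Edge d n) : Fin d → ℤ := g.1.1

def Edge.tgt (g : Edge d n) : Fin d → ℤ := g.1.1 + unit d g.1.2

def Edge.Joins (g : Edge d n) (v w : Fin d → ℤ) : Prop :=
  v = g.src ∧ w = g.tgt ∨ v = g.tgt ∧ w = g.src

def openAdj (U : Finset (Edge d n)) (χ : Edge d n → Bool) (v w : Fin d → ℤ) : Prop :=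
  ∃ g ∈ U, χ g = true ∧ g.Joins v w

lemma Edge.Joins.touches {g : Edge d n} {v w : Fin d → ℤ} (h : g.Joins v w) :
    v = g.src ∨ v = g.tgt := h.imp And.left And.left

lemma Edge.Joins.touches_right {g : Edge d n} {v w : Fin d → ℤ} (h : g.Joins v w) :
    w = g.src ∨ w = g.tgt := h.symm.imp And.right And.right

lemma ext_edge (χ : Edge d n → Bool) (g : Edge d n) : ext d n χ g.1 = χ g := by
  simp [ext, g.2]

lemma adj_ext_iff {χ : Edge d n → Bool} {v w : Fin d → ℤ} :
    adj d (ext d n χ) v w ↔ openAdj univ χ v w := by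
  constructor
  · rintro ⟨i, ⟨hopen, rfl⟩ | ⟨hopen, rfl⟩⟩ <;>
    · unfold ext at hopen
      split_ifs at hopen with hmem
      exact ⟨⟨_, hmem⟩, mem_univ _, hopen, by simp [Edge.Joins, Edge.src, Edge.tgt]⟩
  · rintro ⟨g, -, hopen, ⟨rfl, rfl⟩ | ⟨rfl, rfl⟩⟩
    · exact ⟨g.1.2, .inl ⟨by rw [Edge.src, ext_edge, hopen], rfl⟩⟩
    · exact ⟨g.1.2, .inr ⟨by rw [Edge.src, ext_edge, hopen], rfl⟩⟩

/-- Explores the open cluster of `C` through the edges of `U`. -/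
noncomputable def explore (U : Finset (Edge d n)) (C : Finset (Fin d → ℤ)) :
    DecisionTree (Edge d n) :=
  if h : ∃ g ∈ U, g.src ∈ C ∨ g.tgt ∈ C then
    .node h.choose fun b =>
      explore (U.erase h.choose) (if b then insert h.choose.src (insert h.choose.tgt C) else C)
  else .leaf
termination_by U.card
decreasing_by all_goals exact card_erase_lt_of_mem h.choose_spec.1

lemma revealed_explore_subset (U : Finset (Edge d n)) (C : Finset (Fin d → ℤ))
    (χ : Edge d n → Bool) : (explore U C).revealed χ ⊆ U := by
  induction U using Finset.strongInduction generalizing C with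
  | _ U ih =>
    rw [explore]
    split_ifs with h
    · obtain ⟨hgU, -⟩ := h.choose_spec
      rw [DecisionTree.revealed_node, insert_subset_iff]
      exact ⟨hgU, (ih _ (erase_ssubset hgU) _).trans (erase_subset _ _)⟩
    · simp

lemma nodup_explore (U : Finset (Edge d n)) (C : Finset (Fin d → ℤ)) : (explore U C).Nodup := by
  induction U using Finset.strongInduction generalizing C with
  | _ U ih =>
    rw [explore]
    split_ifs with h
    · obtain ⟨hgU, -⟩ := h.choose_spec
      exact fun b => ⟨fun χ hg => notMem_erase _ _ (revealed_explore_subset _ _ χ hg),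
        ih _ (erase_ssubset hgU) _⟩
    · trivial

lemma exists_conn_of_mem_revealed_explore {U : Finset (Edge d n)} {C : Finset (Fin d → ℤ)}
    {χ : Edge d n → Bool} {g : Edge d n} (hg : g ∈ (explore U C).revealed χ) :
    ∃ c ∈ C, conn d (ext d n χ) c g.src ∨ conn d (ext d n χ) c g.tgt := by
  induction U using Finset.strongInduction generalizing C with
  | _ U ih =>
    rw [explore] at hg
    split_ifs at hg with h
    · set g₀ := h.choose
      obtain ⟨hg₀U, hg₀C⟩ := h.choose_spec
      rw [DecisionTree.revealed_node, mem_insert] at hg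
      rcases hg with rfl | hg
      · exact hg₀C.elim (fun hC => ⟨_, hC, .inl .refl⟩) fun hC => ⟨_, hC, .inr .refl⟩
      obtain ⟨c, hc, hcg⟩ := ih _ (erase_ssubset hg₀U) hg
      cases hb : χ g₀
      · simp only [hb] at hc
        exact ⟨c, hc, hcg⟩
      · simp only [hb, if_true, mem_insert] at hc
        have hadj : adj d (ext d n χ) g₀.src g₀.tgt :=
          adj_ext_iff.2 ⟨g₀, mem_univ _, hb, .inl ⟨rfl, rfl⟩⟩
        obtain ⟨c₀, hc₀, hc₀g₀⟩ :
            ∃ c₀ ∈ C, conn d (ext d n χ) c₀ g₀.src ∧ conn d (ext d n χ) c₀ g₀.tgt :=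
          hg₀C.elim (fun hC => ⟨_, hC, .refl, .single hadj⟩)
            fun hC => ⟨_, hC, .single (adj_symm hadj), .refl⟩
        rcases hc with rfl | rfl | hc
        · exact ⟨c₀, hc₀, hcg.imp hc₀g₀.1.trans hc₀g₀.1.trans⟩
        · exact ⟨c₀, hc₀, hcg.imp hc₀g₀.2.trans hc₀g₀.2.trans⟩
        · exact ⟨c, hc, hcg⟩
    · simp at hg

lemma openAdj_erase_of_closed {U : Finset (Edge d n)} {χ : Edge d n → Bool} {g₀ : Edge d n}
    (hg₀ : χ g₀ = false) {v w : Fin d → ℤ} (h : openAdj U χ v w) :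
    openAdj (U.erase g₀) χ v w := by
  obtain ⟨g, hgU, hg, hvw⟩ := h
  exact ⟨g, mem_erase.2 ⟨by rintro rfl; simp [hg₀] at hg, hgU⟩, hg, hvw⟩

/-- The last visit of a path to an endpoint of `g₀` starts a path avoiding `g₀`. -/
lemma exists_reflTransGen_openAdj_erase {U : Finset (Edge d n)} {χ : Edge d n → Bool}
    (g₀ : Edge d n) {c v : Fin d → ℤ} (h : ReflTransGen (openAdj U χ) c v) :
    ∃ c', (c' = g₀.src ∨ c' = g₀.tgt ∨ c' = c) ∧
      ReflTransGen (openAdj (U.erase g₀) χ) c' v := by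
  induction h with
  | refl => exact ⟨c, .inr (.inr rfl), .refl⟩
  | @tail w v _ hwv ih =>
    obtain ⟨g, hgU, hg, hj⟩ := hwv
    rcases eq_or_ne g g₀ with rfl | hne
    · exact ⟨v, hj.touches_right.imp_right .inl, .refl⟩
    · obtain ⟨c', hc', hc'w⟩ := ih
      exact ⟨c', hc', hc'w.tail ⟨g, mem_erase.2 ⟨hne, hgU⟩, hg, hj⟩⟩

lemma mem_revealed_explore {U : Finset (Edge d n)} {C : Finset (Fin d → ℤ)}
    {χ : Edge d n → Bool} {g : Edge d n} (hgU : g ∈ U) {c v : Fin d → ℤ} (hc : c ∈ C)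
    (hcv : ReflTransGen (openAdj U χ) c v) (hv : v = g.src ∨ v = g.tgt) :
    g ∈ (explore U C).revealed χ := by
  induction U using Finset.strongInduction generalizing C c with
  | _ U ih =>
    rw [explore]
    split_ifs with h
    · set g₀ := h.choose
      obtain ⟨hg₀U, -⟩ := h.choose_spec
      rw [DecisionTree.revealed_node, mem_insert]
      rcases eq_or_ne g g₀ with rfl | hne
      · exact .inl rfl
      have hgU' : g ∈ U.erase g₀ := mem_erase.2 ⟨hne, hgU⟩
      refine .inr ?_
      cases hb : χ g₀
      · exact ih _ (erase_ssubset hg₀U) hgU' hc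
          (ReflTransGen.mono (fun _ _ => openAdj_erase_of_closed hb) _ _ hcv)
      · obtain ⟨c', hc', hc'v⟩ := exists_reflTransGen_openAdj_erase g₀ hcv
        refine ih _ (erase_ssubset hg₀U) hgU' ?_ hc'v
        simp only [if_true, mem_insert]
        rcases hc' with h | h | rfl
        exacts [.inl h, .inr (.inl h), .inr (.inr hc)]
    · refine (h ?_).elim
      rcases hcv.cases_head with rfl | ⟨w, ⟨g', hg'U, -, hj⟩, -⟩
      · exact ⟨g, hgU, by rcases hv with rfl | rfl <;> simp [hc]⟩
      · exact ⟨g', hg'U, by rcases hj.touches with rfl | rfl <;> simp [hc]⟩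

end Exploration

section OneArm

variable {d n : ℕ}

lemma Ep_eq_expectation (p : ℝ) (f : (Edge d n → Bool) → ℝ) :
    Ep d n p f = expectation p f := by
  have hbw : ∀ σ : Edge d n → Bool, bw d n p σ = weight p σ := fun σ => by
    simp [bw, weight, coin, prod_ite, Bool.not_eq_true]
  simp only [Ep, expectation, hbw]

lemma theta_eq_expectation (k : ℕ) (p : ℝ) : theta d n k p = expectation p (oneArmInd d n k) :=
  Ep_eq_expectation p _

lemma Cov_eq_cov (p : ℝ) (f g : (Edge d n → Bool) → ℝ) : Cov d n p f g = cov p f g := by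
  simp only [Cov, cov, Ep_eq_expectation]

lemma oneArmInd_eq_zero_or_one (k : ℕ) (χ : Edge d n → Bool) :
    oneArmInd d n k χ = 0 ∨ oneArmInd d n k χ = 1 := by
  unfold oneArmInd
  split_ifs <;> simp

lemma oneArmInd_nonneg (k : ℕ) (χ : Edge d n → Bool) : 0 ≤ oneArmInd d n k χ := by
  rcases oneArmInd_eq_zero_or_one k χ with h | h <;> simp [h]

lemma conn_mono {χ χ' : Edge d n → Bool} (h : ∀ g, χ g = true → χ' g = true)
    {v w : Fin d → ℤ} (hvw : conn d (ext d n χ) v w) : conn d (ext d n χ') v w :=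
  ReflTransGen.mono (fun _ _ hab => by
    obtain ⟨g, hg, hopen, hj⟩ := adj_ext_iff.1 hab
    exact adj_ext_iff.2 ⟨g, hg, h g hopen, hj⟩) _ _ hvw

lemma oneArmInd_mono (k : ℕ) {χ χ' : Edge d n → Bool}
    (h : ∀ g, χ g = true → χ' g = true) :
    oneArmInd d n k χ ≤ oneArmInd d n k χ' := by
  unfold oneArmInd
  split_ifs with hχ hχ'
  · exact le_rfl
  · obtain ⟨y, hy, h0y⟩ := hχ
    exact (hχ' ⟨y, hy, conn_mono h h0y⟩).elim
  · exact zero_le_one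
  · exact le_rfl

lemma oneArmInd_update_le (k : ℕ) (χ : Edge d n → Bool) (g : Edge d n) :
    oneArmInd d n k (update χ g false) ≤ oneArmInd d n k (update χ g true) :=
  oneArmInd_mono k fun e he => by
    rcases eq_or_ne e g with rfl | hne
    · simp
    · rwa [update_of_ne hne] at he ⊢

lemma theta_nonneg {p : ℝ} (hp0 : 0 ≤ p) (hp1 : p ≤ 1) (k : ℕ) : 0 ≤ theta d n k p := by
  rw [theta_eq_expectation]
  exact expectation_nonneg hp0 hp1 (oneArmInd_nonneg k)

lemma theta_zero (hd : 1 ≤ d) (p : ℝ) : theta d n 0 p = 1 := by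
  have : oneArmInd d n 0 = fun _ => 1 :=
    funext fun _ => if_pos ⟨0, (mem_bdryBox_iff hd).2 supNorm_zero, .refl⟩
  rw [theta_eq_expectation, this, expectation_const]

lemma exists_mem_bdryBox_conn (hd : 1 ≤ d) {ω : (Fin d → ℤ) × Fin d → Bool}
    {y : Fin d → ℤ} (h : conn d ω 0 y) {k : ℕ} (hk : k ≤ supNorm y) :
    ∃ b ∈ bdryBox d k, conn d ω 0 b := by
  obtain ⟨b, hb, h0b⟩ := reflTransGen_exists_first_hit
    (fun v w hvw => by simpa using supNorm_sub_le_of_adj hvw 0) h (by simp) hk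
  exact ⟨b, (mem_bdryBox_iff hd).2 hb, ReflTransGen.mono (fun _ _ => And.left) _ _ h0b⟩

lemma conn_of_agree_on_revealed_explore {C : Finset (Fin d → ℤ)} {χ χ' : Edge d n → Bool}
    (hag : ∀ g ∈ (explore univ C).revealed χ, χ' g = χ g) {c v : Fin d → ℤ}
    (hc : c ∈ C) (hcv : conn d (ext d n χ) c v) : conn d (ext d n χ') c v := by
  induction hcv with
  | refl => exact .refl
  | @tail w v hcw hwv ih =>
    obtain ⟨g, -, hopen, hj⟩ := adj_ext_iff.1 hwv
    have hg : g ∈ (explore univ C).revealed χ := mem_revealed_explore (mem_univ g) hc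
      (ReflTransGen.mono (fun _ _ => adj_ext_iff.1) _ _ hcw) hj.touches
    exact ih.tail (adj_ext_iff.2 ⟨g, mem_univ g, (hag g hg).trans hopen, hj⟩)

/-- An open path from `0` to `∂Λ_n` crosses `∂Λ_k`, so it lies in the explored cluster. -/
lemma oneArm_of_agree_on_revealed_explore (hd : 1 ≤ d) {k : ℕ} (hk : k ≤ n)
    {χ χ' : Edge d n → Bool}
    (hag : ∀ g ∈ (explore univ (bdryBox d k)).revealed χ, χ' g = χ g)
    (h : ∃ y ∈ bdryBox d n, conn d (ext d n χ) 0 y) :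
    ∃ y ∈ bdryBox d n, conn d (ext d n χ') 0 y := by
  obtain ⟨y, hy, h0y⟩ := h
  obtain ⟨b, hb, h0b⟩ :=
    exists_mem_bdryBox_conn hd h0y (hk.trans ((mem_bdryBox_iff hd).1 hy).ge)
  have hb0 := conn_of_agree_on_revealed_explore hag hb (conn_symm h0b)
  have hby := conn_of_agree_on_revealed_explore hag hb
    (ReflTransGen.trans (conn_symm h0b) h0y)
  exact ⟨y, hy, ReflTransGen.trans (conn_symm hb0) hby⟩

lemma determines_oneArmInd (hd : 1 ≤ d) {k : ℕ} (hk : k ≤ n) :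
    (explore univ (bdryBox d k)).Determines (oneArmInd d n n) := by
  intro χ χ' hag
  have hag' : ∀ g ∈ (explore univ (bdryBox d k)).revealed χ', χ g = χ' g := by
    rw [DecisionTree.determines_revealed _ χ χ' hag]
    exact fun g hg => (hag g hg).symm
  exact if_congr ⟨oneArm_of_agree_on_revealed_explore hd hk hag',
    oneArm_of_agree_on_revealed_explore hd hk hag⟩ rfl rfl

end OneArm

section Translation

variable {d n : ℕ}

noncomputable def translateEquiv (z : Fin d → ℤ) {J : ℕ} (hJ : J ≤ n) :
    {g : Edge d n // g.1 ∈ boxEdges d J ∧ (g.1.1 + z, g.1.2) ∈ boxEdges d n} ≃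
      {g : Edge d n // (g.1.1 - z, g.1.2) ∈ boxEdges d J} where
  toFun g := ⟨⟨(g.1.1.1 + z, g.1.1.2), g.2.2⟩, by simp [g.2.1]⟩
  invFun g := ⟨⟨(g.1.1.1 - z, g.1.1.2), boxEdges_mono hJ g.2⟩, g.2, by simp⟩
  left_inv g := by simp
  right_inv g := by simp

/-- Translation by `z` does not preserve `E_n`; only its action on the edges near `z` matters, so
it is extended arbitrarily to a permutation of `E_n`. -/
noncomputable def translatePerm (z : Fin d → ℤ) {J : ℕ} (hJ : J ≤ n) :
    Equiv.Perm (Edge d n) :=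
  (translateEquiv z hJ).extendSubtype

lemma exists_translatePerm_eq (z : Fin d → ℤ) {J : ℕ} (hJ : J ≤ n) {g : Edge d n}
    (hg : (g.1.1 - z, g.1.2) ∈ boxEdges d J) :
    ∃ f : Edge d n, f.src = g.src - z ∧ f.tgt = g.tgt - z ∧ translatePerm z hJ f = g := by
  set f := (translateEquiv z hJ).symm ⟨g, hg⟩
  refine ⟨f, rfl, by simp [f, translateEquiv, Edge.tgt]; abel, ?_⟩
  rw [translatePerm, Equiv.extendSubtype_apply_of_mem _ f.1 f.2, Equiv.apply_symm_apply]

lemma conn_translatePerm (z : Fin d → ℤ) {J : ℕ} (hJ : J ≤ n) {χ : Edge d n → Bool}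
    {v : Fin d → ℤ} (h : ReflTransGen (fun x y => adj d (ext d n χ) x y ∧
      supNorm (x - z) ≤ J ∧ supNorm (y - z) ≤ J) z v) :
    conn d (ext d n (χ ∘ translatePerm z hJ)) 0 (v - z) := by
  induction h with
  | refl => rw [sub_self]; exact .refl
  | @tail x y _ hxy ih =>
    obtain ⟨hadj, hx, hy⟩ := hxy
    obtain ⟨g, -, hopen, hj⟩ := adj_ext_iff.1 hadj
    have hg : (g.1.1 - z, g.1.2) ∈ boxEdges d J := by
      rw [mem_boxEdges_iff, mem_box_iff, mem_box_iff, sub_add_eq_add_sub]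
      rcases hj with ⟨rfl, rfl⟩ | ⟨rfl, rfl⟩
      exacts [⟨hx, hy⟩, ⟨hy, hx⟩]
    obtain ⟨f, hfs, hft, hf⟩ := exists_translatePerm_eq z hJ hg
    refine ih.tail (adj_ext_iff.2 ⟨f, mem_univ f, by simpa [hf] using hopen, ?_⟩)
    rw [Edge.Joins, hfs, hft]
    rcases hj with ⟨rfl, rfl⟩ | ⟨rfl, rfl⟩
    exacts [.inl ⟨rfl, rfl⟩, .inr ⟨rfl, rfl⟩]

end Translation

lemma sum_range_le_two_mul_sum_range {n r : ℕ} (hr : r ≤ n) {a b : ℕ → ℝ}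
    (hb : ∀ j, 0 ≤ b j) (hab : ∀ k < n, ∀ j < n, j ≤ Nat.dist k r → a k ≤ b j) :
    ∑ k ∈ range n, a k ≤ 2 * ∑ j ∈ range n, b j := by
  have hsub : ∀ m ≤ n, ∑ j ∈ range m, b j ≤ ∑ j ∈ range n, b j := fun m hm =>
    sum_le_sum_of_subset_of_nonneg (range_subset_range.2 hm) fun j _ _ => hb j
  have hbelow : ∑ k ∈ range r, a k ≤ ∑ j ∈ range n, b j := calc
    _ ≤ ∑ k ∈ range r, b (r - 1 - k) := sum_le_sum fun k hk => by
      rw [mem_range] at hk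
      exact hab k (by omega) _ (by omega) (by unfold Nat.dist; omega)
    _ = ∑ j ∈ range r, b j := sum_range_reflect b r
    _ ≤ _ := hsub r hr
  have habove : ∑ k ∈ Ico r n, a k ≤ ∑ j ∈ range n, b j := calc
    _ ≤ ∑ k ∈ Ico r n, b (k - r) := sum_le_sum fun k hk => by
      rw [mem_Ico] at hk
      exact hab k hk.2 _ (by omega) (by unfold Nat.dist; omega)
    _ = ∑ j ∈ range (n - r), b j := by rw [sum_Ico_eq_sum_range]; simp
    _ ≤ _ := hsub _ (Nat.sub_le n r)
  rw [← sum_range_add_sum_Ico a hr]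
  linarith

noncomputable def connBdryInd (d n k : ℕ) (z : Fin d → ℤ) (χ : Edge d n → Bool) : ℝ :=
  if ∃ c ∈ bdryBox d k, conn d (ext d n χ) c z then 1 else 0

section Revealment

variable {d n : ℕ} {p : ℝ}

lemma expectation_connBdryInd_le_theta (hd : 1 ≤ d) (hp0 : 0 ≤ p) (hp1 : p ≤ 1) {k J : ℕ}
    (hJn : J ≤ n) {z : Fin d → ℤ} (hJ : J ≤ Nat.dist k (supNorm z)) :
    expectation p (connBdryInd d n k z) ≤ theta d n J p := by
  rw [theta_eq_expectation, ← expectation_comp_perm p (translatePerm z hJn) (oneArmInd d n J)]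
  refine expectation_mono hp0 hp1 fun χ => ?_
  unfold connBdryInd
  split_ifs with h
  · obtain ⟨c, hc, hcz⟩ := h
    have hJc : J ≤ supNorm (c - z) := by
      have h₁ := supNorm_add_le z (c - z)
      have h₂ := supNorm_add_le c (z - c)
      rw [add_sub_cancel] at h₁ h₂
      rw [supNorm_sub_comm z c, (mem_bdryBox_iff hd).1 hc] at h₂
      rw [(mem_bdryBox_iff hd).1 hc] at h₁
      unfold Nat.dist at hJ
      omega
    obtain ⟨v, hv, hzv⟩ := reflTransGen_exists_first_hit
      (fun _ _ hab => supNorm_sub_le_of_adj hab z) (conn_symm hcz) (by simp) hJc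
    exact (if_pos ⟨v - z, (mem_bdryBox_iff hd).2 hv, conn_translatePerm z hJn hzv⟩).ge
  · exact oneArmInd_nonneg J _

lemma sum_expectation_connBdryInd_le (hd : 1 ≤ d) (hp0 : 0 ≤ p) (hp1 : p ≤ 1)
    {z : Fin d → ℤ} (hz : z ∈ box d n) :
    ∑ k ∈ range n, expectation p (connBdryInd d n k z)
      ≤ 2 * ∑ k ∈ range n, theta d n k p :=
  sum_range_le_two_mul_sum_range (mem_box_iff.1 hz) (theta_nonneg hp0 hp1) fun _ _ _ hj hjk =>
    expectation_connBdryInd_le_theta hd hp0 hp1 hj.le hjk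

lemma revealment_explore_le (hp0 : 0 ≤ p) (hp1 : p ≤ 1) (k : ℕ) (g : Edge d n) :
    revealment p (explore univ (bdryBox d k)) g
      ≤ expectation p (connBdryInd d n k g.src) + expectation p (connBdryInd d n k g.tgt) := by
  rw [revealment, ← expectation_add]
  refine expectation_mono hp0 hp1 fun χ => ?_
  unfold connBdryInd
  split_ifs with hg hsrc htgt htgt <;> try norm_num
  obtain ⟨c, hc, h | h⟩ := exists_conn_of_mem_revealed_explore hg
  exacts [hsrc ⟨c, hc, h⟩, htgt ⟨c, hc, h⟩]

lemma sum_revealment_explore_le (hd : 1 ≤ d) (hp0 : 0 ≤ p) (hp1 : p ≤ 1) (g : Edge d n) :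
    ∑ k ∈ range n, revealment p (explore univ (bdryBox d k)) g
      ≤ 4 * ∑ k ∈ range n, theta d n k p := by
  obtain ⟨hsrc, htgt⟩ := mem_boxEdges_iff.1 g.2
  calc _ ≤ ∑ k ∈ range n,
          (expectation p (connBdryInd d n k g.src) + expectation p (connBdryInd d n k g.tgt)) :=
        sum_le_sum fun k _ => revealment_explore_le hp0 hp1 k g
    _ ≤ 2 * ∑ k ∈ range n, theta d n k p + 2 * ∑ k ∈ range n, theta d n k p := by
        rw [sum_add_distrib]
        exact add_le_add (sum_expectation_connBdryInd_le hd hp0 hp1 hsrc)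
          (sum_expectation_connBdryInd_le hd hp0 hp1 htgt)
    _ = _ := by ring

lemma variance_le_sum_revealment_explore_mul_cov (hd : 1 ≤ d) (hp0 : 0 ≤ p) (hp1 : p ≤ 1)
    {k : ℕ} (hk : k ≤ n) :
    theta d n n p * (1 - theta d n n p) ≤ ∑ g, revealment p (explore univ (bdryBox d k)) g *
      cov p (oneArmInd d n n) (fun σ => if σ g then 1 else 0) := by
  rw [theta_eq_expectation]
  exact variance_le_sum_revealment_mul_cov hp0 hp1 (nodup_explore _ _) (oneArmInd_eq_zero_or_one n)
    (determines_oneArmInd hd hk) fun g χ => oneArmInd_update_le n χ g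

lemma natCast_mul_variance_le (hd : 1 ≤ d) (hp0 : 0 ≤ p) (hp1 : p ≤ 1) :
    n * (theta d n n p * (1 - theta d n n p)) ≤ 4 * (∑ k ∈ range n, theta d n k p) *
      ∑ g, cov p (oneArmInd d n n) (fun σ => if σ g then 1 else 0) := by
  set C : Edge d n → ℝ := fun g => cov p (oneArmInd d n n) (fun σ => if σ g then 1 else 0)
  calc (n : ℝ) * (theta d n n p * (1 - theta d n n p))
      = ∑ k ∈ range n, theta d n n p * (1 - theta d n n p) := by simp
    _ ≤ ∑ k ∈ range n, ∑ g, revealment p (explore univ (bdryBox d k)) g * C g :=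
      sum_le_sum fun k hk =>
        variance_le_sum_revealment_explore_mul_cov hd hp0 hp1 (mem_range.1 hk).le
    _ = ∑ g, (∑ k ∈ range n, revealment p (explore univ (bdryBox d k)) g) * C g := by
      rw [sum_comm]; simp only [sum_mul]
    _ ≤ ∑ g, 4 * (∑ k ∈ range n, theta d n k p) * C g :=
      sum_le_sum fun g _ => mul_le_mul_of_nonneg_right (sum_revealment_explore_le hd hp0 hp1 g)
        (cov_coord_nonneg hp0 hp1 fun χ => oneArmInd_update_le n χ g)
    _ = _ := (mul_sum _ _ _).symm

end Revealment

/-- Covariance lower bound from exploration algorithms: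
`∑_{e ∈ E_n} Cov_p(1_{0 ↔ ∂Λ_n}, ω_e) ≥ (n / (8 S_n)) θ_n(p) (1 - θ_n(p))`,
with `S_n = ∑_{k=0}^{n-1} θ_k(p)`. -/
theorem cov_lower_bound (d n : ℕ) (hd : 1 ≤ d) (hn : 1 ≤ n) (p : ℝ)
    (hp : p ∈ Set.Ioo (0 : ℝ) 1) :
    (n : ℝ) / (8 * ∑ k ∈ Finset.range n, theta d n k p) *
        (theta d n n p * (1 - theta d n n p))
      ≤ ∑ e : {e // e ∈ boxEdges d n},
          Cov d n p (oneArmInd d n n) (fun σ => if σ e then 1 else 0) := by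
  have hp0 : 0 ≤ p := hp.1.le
  have hp1 : p ≤ 1 := hp.2.le
  have hS : 1 ≤ ∑ k ∈ range n, theta d n k p :=
    theta_zero hd p ▸ single_le_sum (fun k _ => theta_nonneg hp0 hp1 k) (mem_range.2 hn)
  have hcov : 0 ≤ ∑ g : Edge d n, cov p (oneArmInd d n n) (fun σ => if σ g then 1 else 0) :=
    sum_nonneg fun g _ => cov_coord_nonneg hp0 hp1 fun χ => oneArmInd_update_le n χ g
  have key := natCast_mul_variance_le hd hp0 hp1 (n := n)
  simp only [Cov_eq_cov]
  rw [div_mul_eq_mul_div, div_le_iff₀ (by positivity)]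
  nlinarith

end Stmt17
end
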